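/- arXiv:1106.5560 — 8 statements merged into one kernel-verified Lean document; each statement's English description precedes it below -/
import Mathlib

section
/- Let p ≥ 3 be prime, and let a, θ ∈ ℚ_p satisfy |a|_p < 1 and |θ − 1|_p ≤ 1/p. Then the quadratic polynomial Q(x) = 2x² + ((1 − θ)(1 − a) + 1 − 2a)x − a has two roots ĥ⁽¹⁾, ĥ⁽²⁾ in ℚ_p with |ĥ⁽¹⁾|_p = |a|_p and |ĥ⁽²⁾|_p = 1 (in particular the two roots are distinct). -/
/-!
Write `Q = 2x² + bx - a`. Since `θ ≡ 1` and `a ≡ 0` modulo `p`, the coefficient `b` is a unit and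
`Q ≡ x (2x + 1)`: the root `0` is simple, so Hensel's lemma lifts it to a root `ĥ⁽¹⁾` of norm `< 1`,
and `a = ĥ⁽¹⁾ (2ĥ⁽¹⁾ + b)` with `|2ĥ⁽¹⁾ + b|_p = 1` gives `|ĥ⁽¹⁾|_p = |a|_p`. The other root
`-b/2 - ĥ⁽¹⁾` (Vieta) is then a unit.
-/

open Polynomial

lemma IsUltrametricDist.norm_add_eq_right_of_norm_lt {S : Type*} [SeminormedAddGroup S]
    [IsUltrametricDist S] {x y : S} (h : ‖x‖ < ‖y‖) : ‖x + y‖ = ‖y‖ := by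
  rw [norm_add_eq_max_of_norm_ne_norm h.ne, max_eq_right h.le]

lemma quadratic_eq_zero_neg_div_sub {K : Type*} [Field K] {c b d z : K} (hc : c ≠ 0)
    (hz : c * z ^ 2 + b * z + d = 0) : c * (-b / c - z) ^ 2 + b * (-b / c - z) + d = 0 := by
  rw [← hz]
  field_simp
  ring

variable {p : ℕ} [Fact p.Prime]

lemma Padic.norm_two_eq_one (hp : p ≠ 2) : ‖(2 : ℚ_[p])‖ = 1 := by
  have h := Padic.norm_natCast_eq_one_iff (p := p) (n := 2)
  push_cast at h
  exact h.2 ((Nat.coprime_primes Fact.out Nat.prime_two).2 hp)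

lemma PadicInt.exists_quadratic_root_norm_lt_one (c b d : ℤ_[p]) (hb : ‖b‖ = 1)
    (hd : ‖d‖ < 1) : ∃ z : ℤ_[p], c * z ^ 2 + b * z + d = 0 ∧ ‖z‖ < 1 := by
  set F : ℤ_[p][X] := C c * X ^ 2 + C b * X + C d
  have hF : ∀ z, F.aeval z = c * z ^ 2 + b * z + d := fun z => by simp [F]
  have hF' : F.derivative.aeval (0 : ℤ_[p]) = b := by simp [F]
  obtain ⟨z, hz, hz0, -, -⟩ :=
    hensels_lemma (F := F) (a := 0) (by rw [hF, hF', hb]; simpa using hd)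
  rw [hF', hb, sub_zero] at hz0
  exact ⟨z, hF z ▸ hz, hz0⟩

lemma Padic.exists_quadratic_root_norm_eq (c b d : ℚ_[p]) (hc : ‖c‖ ≤ 1) (hb : ‖b‖ = 1)
    (hd : ‖d‖ < 1) : ∃ z : ℚ_[p], c * z ^ 2 + b * z + d = 0 ∧ ‖z‖ = ‖d‖ := by
  obtain ⟨z, hz, hz1⟩ := PadicInt.exists_quadratic_root_norm_lt_one ⟨c, hc⟩ ⟨b, hb.le⟩ ⟨d, hd.le⟩
    (by simpa [PadicInt.norm_def] using hb) (by simpa [PadicInt.norm_def] using hd)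
  have hz : c * (z : ℚ_[p]) ^ 2 + b * z + d = 0 := by
    exact_mod_cast congrArg ((↑) : ℤ_[p] → ℚ_[p]) hz
  have hcz : ‖c * (z : ℚ_[p])‖ < ‖b‖ := by
    rw [norm_mul, hb, ← PadicInt.norm_def]
    exact (mul_le_of_le_one_left (norm_nonneg _) hc).trans_lt hz1
  have hd_eq : d = -(z * (c * z + b)) := by linear_combination hz
  refine ⟨z, hz, ?_⟩
  rw [hd_eq, norm_neg, norm_mul, IsUltrametricDist.norm_add_eq_right_of_norm_lt hcz, hb, mul_one]

lemma Padic.exists_two_quadratic_roots (c b d : ℚ_[p]) (hc : ‖c‖ = 1) (hb : ‖b‖ = 1)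
    (hd : ‖d‖ < 1) : ∃ z w : ℚ_[p], c * z ^ 2 + b * z + d = 0 ∧ c * w ^ 2 + b * w + d = 0 ∧
      ‖z‖ = ‖d‖ ∧ ‖w‖ = 1 := by
  obtain ⟨z, hz, hzd⟩ := Padic.exists_quadratic_root_norm_eq c b d hc.le hb hd
  have hc0 : c ≠ 0 := norm_ne_zero_iff.1 (by simp [hc])
  have hw : ‖-b / c - z‖ = 1 := by
    have hbc : ‖-b / c‖ = 1 := by rw [norm_div, norm_neg, hb, hc, div_one]
    rw [sub_eq_neg_add, IsUltrametricDist.norm_add_eq_right_of_norm_lt (by simpa [hbc, hzd]), hbc]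
  exact ⟨z, -b / c - z, hz, quadratic_eq_zero_neg_div_sub hc0 hz, hzd, hw⟩

/-- For a prime `p ≥ 3` and `a, θ ∈ ℚ_p` with `|a|_p < 1` and
`|θ - 1|_p ≤ 1/p`, the quadratic `Q(x) = 2x² + ((1-θ)(1-a) + 1 - 2a)x - a`
has two roots `ĥ⁽¹⁾, ĥ⁽²⁾ ∈ ℚ_p` with `|ĥ⁽¹⁾|_p = |a|_p` and `|ĥ⁽²⁾|_p = 1`
(in particular the roots are distinct). -/
theorem potts_quadratic_two_roots (p : ℕ) [Fact p.Prime] (hp : 3 ≤ p)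
    (a θ : ℚ_[p]) (ha : ‖a‖ < 1) (hθ : ‖θ - 1‖ ≤ 1 / (p : ℝ)) :
    ∃ h1 h2 : ℚ_[p],
      2 * h1 ^ 2 + ((1 - θ) * (1 - a) + 1 - 2 * a) * h1 - a = 0 ∧
      2 * h2 ^ 2 + ((1 - θ) * (1 - a) + 1 - 2 * a) * h2 - a = 0 ∧
      ‖h1‖ = ‖a‖ ∧ ‖h2‖ = 1 ∧ h1 ≠ h2 := by
  have h2 : ‖(2 : ℚ_[p])‖ = 1 := Padic.norm_two_eq_one (by omega)
  have hθ' : ‖1 - θ‖ < 1 := by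
    have hp1 : (1 : ℝ) < p := by exact_mod_cast (show 1 < p by omega)
    exact (norm_sub_rev θ 1 ▸ hθ).trans_lt ((div_lt_one (by positivity)).2 hp1)
  have hb : ‖(1 - θ) * (1 - a) + 1 - 2 * a‖ = 1 := by
    have h1a : ‖1 - a‖ = 1 := by
      rw [sub_eq_neg_add, IsUltrametricDist.norm_add_eq_right_of_norm_lt (by simpa), norm_one]
    have hsmall : ‖(1 - θ) * (1 - a) + -(2 * a)‖ < 1 :=
      (IsUltrametricDist.norm_add_le_max _ _).trans_lt
        (max_lt (by rwa [norm_mul, h1a, mul_one]) (by rwa [norm_neg, norm_mul, h2, one_mul]))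
    rw [show (1 - θ) * (1 - a) + 1 - 2 * a = (1 - θ) * (1 - a) + -(2 * a) + 1 by ring,
      IsUltrametricDist.norm_add_eq_right_of_norm_lt (by rwa [norm_one]), norm_one]
  obtain ⟨z, w, hz, hw, hza, hw1⟩ := Padic.exists_two_quadratic_roots _ _ (-a) h2 hb (by simpa)
  rw [norm_neg] at hza
  refine ⟨z, w, by linear_combination hz, by linear_combination hw, hza, hw1, ?_⟩
  rintro rfl
  exact ha.ne (hza ▸ hw1)
end

section
/- Let p ≥ 3 be prime and let α, θ, X ∈ ℚ_p satisfy |α|_p = 1, |1 − α|_p ≤ 1/p, |θ − 1|_p ≤ 1/p and |X|_p < 1 (so |X + 2|_p = 1). Then the polynomial P(x) = x² + (X + θ(1 − α))x − α(X + 1) has two roots x₊, x₋ in ℚ_p satisfying |x₊ − 1|_p ≤ 1/p, |x₋ − 1|_p = 1, |x₋ + 1|_p < 1, and |x₊ − x₋|_p = 1. -/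
/-!
Modulo the maximal ideal of `ℤ_[p]` we have `α ≡ θ ≡ 1` and `X ≡ 0`, so `P` reduces to
`x² - 1 = (x - 1)(x + 1)`, whose roots `±1` are simple because `p ≠ 2`. Hensel's lemma lifts the
root `1` to `x₊`, and by Vieta `x₋ = -(X + θ(1 - α)) - x₊ ≡ -1`. As `‖2‖ = 1`, the open unit balls
around `1` and `-1` are at distance `1` from each other. The bounds `≤ 1/p` are the same as `< 1`,
since the norm takes values in `p^ℤ`.
-/

open Polynomial

theorem IsUltrametricDist.norm_sub_eq_of_norm_sub_lt {E : Type*} [SeminormedAddCommGroup E]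
    [IsUltrametricDist E] {x y a b : E} (hx : ‖x - a‖ < ‖a - b‖) (hy : ‖y - b‖ < ‖a - b‖) :
    ‖x - y‖ = ‖a - b‖ := by
  simp only [← dist_eq_norm] at hx hy ⊢
  have hay : dist a y = dist a b := by
    rw [dist_eq_max_of_dist_ne_dist a b y (by rw [dist_comm b]; exact hy.ne'),
      max_eq_left (by rw [dist_comm]; exact hy.le)]
  rw [dist_eq_max_of_dist_ne_dist x a y (by rw [hay]; exact hx.ne), hay, max_eq_right hx.le]

namespace Padic

variable {p : ℕ} [Fact p.Prime]

theorem norm_le_inv_prime_iff_lt_one (x : ℚ_[p]) : ‖x‖ ≤ 1 / (p : ℝ) ↔ ‖x‖ < 1 := by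
  simpa using norm_le_pow_iff_norm_lt_pow_add_one x (-1)

theorem norm_two_eq_one_s2 (hp : p ≠ 2) : ‖(2 : ℚ_[p])‖ = 1 := by
  exact_mod_cast norm_natCast_eq_one_iff.2 ((Nat.coprime_primes Fact.out Nat.prime_two).2 hp)

theorem norm_eq_one_of_norm_sub_one_lt_one {x : ℚ_[p]} (h : ‖x - 1‖ < 1) : ‖x‖ = 1 :=
  (norm_eq_of_norm_sub_lt_right (by rwa [norm_one])).trans norm_one

theorem norm_add_lt_one {x y : ℚ_[p]} (hx : ‖x‖ < 1) (hy : ‖y‖ < 1) : ‖x + y‖ < 1 :=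
  (nonarchimedean x y).trans_lt (max_lt hx hy)

theorem norm_sub_eq_one_of_norm_sub_one_lt_of_norm_add_one_lt (hp : p ≠ 2) {x y : ℚ_[p]}
    (hx : ‖x - 1‖ < 1) (hy : ‖y + 1‖ < 1) : ‖x - y‖ = 1 := by
  have h2 : ‖(1 : ℚ_[p]) - -1‖ = 1 := by
    rw [sub_neg_eq_add, one_add_one_eq_two, norm_two_eq_one_s2 hp]
  rw [← h2] at hx ⊢
  exact IsUltrametricDist.norm_sub_eq_of_norm_sub_lt hx (by rwa [h2, sub_neg_eq_add])

theorem exists_root_quadratic_of_norm_lt {b c a : ℚ_[p]} (hb : ‖b‖ ≤ 1) (hc : ‖c‖ ≤ 1)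
    (ha : ‖a‖ ≤ 1) (h : ‖a ^ 2 + b * a + c‖ < ‖2 * a + b‖ ^ 2) :
    ∃ z : ℚ_[p], z ^ 2 + b * z + c = 0 ∧ ‖z - a‖ < ‖2 * a + b‖ := by
  obtain ⟨b, rfl⟩ : ∃ b' : ℤ_[p], (b' : ℚ_[p]) = b := ⟨⟨b, hb⟩, rfl⟩
  obtain ⟨c, rfl⟩ : ∃ c' : ℤ_[p], (c' : ℚ_[p]) = c := ⟨⟨c, hc⟩, rfl⟩
  obtain ⟨a, rfl⟩ : ∃ a' : ℤ_[p], (a' : ℚ_[p]) = a := ⟨⟨a, ha⟩, rfl⟩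
  let F : ℤ_[p][X] := X ^ 2 + C b * X + C c
  have hF (z : ℤ_[p]) : F.aeval z = z ^ 2 + b * z + c := by simp [F]
  have hF' (z : ℤ_[p]) : F.derivative.aeval z = 2 * z + b := by simp [F, derivative_pow]
  obtain ⟨z, hz, hza, -⟩ := hensels_lemma (F := F) (a := a) (by rw [hF, hF']; exact_mod_cast h)
  refine ⟨z, by exact_mod_cast congrArg ((↑) : ℤ_[p] → ℚ_[p]) ((hF z).symm.trans hz), ?_⟩
  rw [hF'] at hza
  exact_mod_cast hza

theorem exists_roots_quadratic_near_one_and_neg_one (hp : p ≠ 2) {b c : ℚ_[p]} (hb : ‖b‖ < 1)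
    (hc : ‖c + 1‖ < 1) :
    ∃ x y : ℚ_[p], x ^ 2 + b * x + c = 0 ∧ y ^ 2 + b * y + c = 0 ∧ ‖x - 1‖ < 1 ∧ ‖y + 1‖ < 1 := by
  have hc1 : ‖c‖ = 1 := by
    simpa using norm_eq_of_norm_sub_lt_right (z2 := -1) (by simpa using hc)
  have hd : ‖2 * 1 + b‖ = 1 := by
    rw [← norm_two_eq_one_s2 hp]
    exact norm_eq_of_norm_sub_lt_right (by simpa [norm_two_eq_one_s2 hp] using hb)
  have hP1 : ‖1 ^ 2 + b * 1 + c‖ < ‖2 * 1 + b‖ ^ 2 := by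
    rw [hd, show (1 : ℚ_[p]) ^ 2 + b * 1 + c = b + (c + 1) by ring, one_pow]
    exact norm_add_lt_one hb hc
  obtain ⟨x, hx, hx1⟩ := exists_root_quadratic_of_norm_lt hb.le hc1.le (by simp) hP1
  rw [hd] at hx1
  refine ⟨x, -b - x, hx, by linear_combination hx, hx1, ?_⟩
  rw [show -b - x + 1 = -b + -(x - 1) by ring]
  exact norm_add_lt_one (by rwa [norm_neg]) (by rwa [norm_neg])

end Padic

open Padic in
theorem potts_first_component_roots_general (p : ℕ) [Fact p.Prime] (hp : 3 ≤ p)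
    (α θ X : ℚ_[p]) (hα1 : ‖1 - α‖ ≤ 1 / (p : ℝ))
    (hθ : ‖θ - 1‖ ≤ 1 / (p : ℝ)) (hX : ‖X‖ < 1) :
    ∃ xp xm : ℚ_[p],
      xp ^ 2 + (X + θ * (1 - α)) * xp - α * (X + 1) = 0 ∧
      xm ^ 2 + (X + θ * (1 - α)) * xm - α * (X + 1) = 0 ∧
      ‖xp - 1‖ ≤ 1 / (p : ℝ) ∧ ‖xm - 1‖ = 1 ∧ ‖xm + 1‖ < 1 ∧ ‖xp - xm‖ = 1 := by
  simp only [norm_le_inv_prime_iff_lt_one] at hα1 hθ ⊢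
  have hp2 : p ≠ 2 := by omega
  have hα : ‖α‖ = 1 := norm_eq_one_of_norm_sub_one_lt_one (by rwa [norm_sub_rev])
  have hb : ‖X + θ * (1 - α)‖ < 1 := by
    refine norm_add_lt_one hX ?_
    rwa [norm_mul, norm_eq_one_of_norm_sub_one_lt_one hθ, one_mul]
  have hc : ‖-(α * (X + 1)) + 1‖ < 1 := by
    rw [show -(α * (X + 1)) + 1 = (1 - α) + -(α * X) by ring]
    exact norm_add_lt_one hα1 (by rwa [norm_neg, norm_mul, hα, one_mul])
  obtain ⟨xp, xm, hxp, hxm, hxp1, hxm1⟩ := exists_roots_quadratic_near_one_and_neg_one hp2 hb hc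
  refine ⟨xp, xm, by linear_combination hxp, by linear_combination hxm, hxp1, ?_, hxm1,
    norm_sub_eq_one_of_norm_sub_one_lt_of_norm_add_one_lt hp2 hxp1 hxm1⟩
  rw [norm_sub_rev]
  exact norm_sub_eq_one_of_norm_sub_one_lt_of_norm_add_one_lt hp2 (by simp) hxm1

/-- For a prime `p ≥ 3` and `α, θ, X ∈ ℚ_p` with `|α|_p = 1`,
`|1-α|_p ≤ 1/p`, `|θ-1|_p ≤ 1/p`, `|X|_p < 1`, the polynomial
`P(x) = x² + (X + θ(1-α))x - α(X+1)` has two roots `x₊, x₋ ∈ ℚ_p` with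
`|x₊ - 1|_p ≤ 1/p`, `|x₋ - 1|_p = 1`, `|x₋ + 1|_p < 1` and `|x₊ - x₋|_p = 1`. -/
theorem potts_first_component_roots (p : ℕ) [Fact p.Prime] (hp : 3 ≤ p)
    (α θ X : ℚ_[p]) (hα : ‖α‖ = 1) (hα1 : ‖1 - α‖ ≤ 1 / (p : ℝ))
    (hθ : ‖θ - 1‖ ≤ 1 / (p : ℝ)) (hX : ‖X‖ < 1) :
    ∃ xp xm : ℚ_[p],
      xp ^ 2 + (X + θ * (1 - α)) * xp - α * (X + 1) = 0 ∧
      xm ^ 2 + (X + θ * (1 - α)) * xm - α * (X + 1) = 0 ∧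
      ‖xp - 1‖ ≤ 1 / (p : ℝ) ∧ ‖xm - 1‖ = 1 ∧ ‖xm + 1‖ < 1 ∧ ‖xp - xm‖ = 1 :=
  potts_first_component_roots_general p hp α θ X hα1 hθ hX
end

section
/- Let p ≥ 3 be prime, θ, α ∈ ℚ_p with |θ − 1|_p ≤ 1/p, |α|_p = 1, |1 − α|_p ≤ 1/p, and let λ be a weight with λ(0) = 1, λ(1) = α, |λ(i)|_p < 1 for i ≥ 2, |λ(i)|_p → 0, δ := max_{i≥2}|λ(i)|_p > 0. Then F⁺ maps B_δ into B_δ; more precisely, for every x ∈ B_δ one has |(F⁺(x))_i|_p = |λ(i)|_p ≤ δ for all i ≥ 2. -/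
/-!
Modulo the maximal ideal of `ℤ_p` one has `θ ≡ 1`, `α ≡ 1`, `s_X ≡ 2` and `x_i ≡ X ≡ 0`, so both
the numerator and the denominator of the fraction defining `(F⁺(x))_i` reduce to `4`, a unit
because `p` is odd. Hence the fraction has norm `1`. The smallness of `x_i` and of `X` (by the
ultrametric inequality for the series) comes from `δ` being attained by some `|λ(i)|_p < 1`.
-/

open Filter

lemma norm_mul_lt_one_of_lt_of_le {R : Type*} [SeminormedRing R] {a b : R} (ha : ‖a‖ < 1)
    (hb : ‖b‖ ≤ 1) : ‖a * b‖ < 1 :=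
  (norm_mul_le a b).trans_lt (mul_lt_one_of_nonneg_of_lt_one_left (norm_nonneg a) ha hb)

namespace IsUltrametricDist

section AddGroup

variable {M : Type*} [SeminormedAddGroup M] [IsUltrametricDist M]

lemma norm_add_lt_of_lt {a b : M} {r : ℝ} (ha : ‖a‖ < r) (hb : ‖b‖ < r) : ‖a + b‖ < r :=
  (norm_add_le_max a b).trans_lt (max_lt ha hb)

lemma norm_eq_of_norm_sub_lt {a b : M} (h : ‖a - b‖ < ‖b‖) : ‖a‖ = ‖b‖ := by
  rw [← sub_add_cancel a b, norm_add_eq_max_of_norm_ne_norm h.ne, max_eq_right h.le]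

end AddGroup

section Field

variable {K : Type*} [NormedField K] [IsUltrametricDist K]

lemma norm_eq_one_of_norm_sub_one_lt_one {a : K} (h : ‖a - 1‖ < 1) : ‖a‖ = 1 := by
  rw [← norm_one (α := K)] at h ⊢
  exact norm_eq_of_norm_sub_lt h

lemma norm_eq_one_of_norm_sub_four_lt_one (h4 : ‖(4 : K)‖ = 1) {a : K} (h : ‖a - 4‖ < 1) :
    ‖a‖ = 1 := by
  rw [← h4] at h ⊢
  exact norm_eq_of_norm_sub_lt h

variable {θ α s X : K} (h4 : ‖(4 : K)‖ = 1) (hθ : ‖θ - 1‖ < 1) (hα : ‖α - 1‖ < 1)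
  (hs : ‖s - 2‖ < 1) (hX : ‖X‖ < 1)
include h4 hθ hα hs hX

lemma norm_pottsNumerator_eq_one {y : K} (hy : ‖y‖ ≤ 1) :
    ‖2 * (θ - 1) * y + (α - 1) * θ + X + s + 2‖ = 1 := by
  have h2y : ‖2 * y‖ ≤ 1 := by
    rw [norm_mul]
    exact mul_le_one₀ (by simpa using norm_natCast_le_one K 2) (norm_nonneg y) hy
  have hθ1 : ‖θ‖ ≤ 1 := (norm_eq_one_of_norm_sub_one_lt_one hθ).le
  refine norm_eq_one_of_norm_sub_four_lt_one h4 ?_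
  have hsub : 2 * (θ - 1) * y + (α - 1) * θ + X + s + 2 - 4
      = (θ - 1) * (2 * y) + (α - 1) * θ + X + (s - 2) := by ring
  rw [hsub]
  refine norm_add_lt_of_lt (norm_add_lt_of_lt (norm_add_lt_of_lt ?_ ?_) hX) hs
  · exact norm_mul_lt_one_of_lt_of_le hθ h2y
  · exact norm_mul_lt_one_of_lt_of_le hα hθ1

lemma norm_pottsDenominator_eq_one : ‖(α + 1) * θ + X + s‖ = 1 := by
  have h2 : ‖(2 : K)‖ ≤ 1 := by simpa using norm_natCast_le_one K 2
  have hθ1 : ‖θ‖ ≤ 1 := (norm_eq_one_of_norm_sub_one_lt_one hθ).le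
  refine norm_eq_one_of_norm_sub_four_lt_one h4 ?_
  have hsub : (α + 1) * θ + X + s - 4 = (α - 1) * θ + (θ - 1) * 2 + X + (s - 2) := by ring
  rw [hsub]
  refine norm_add_lt_of_lt (norm_add_lt_of_lt (norm_add_lt_of_lt ?_ ?_) hX) hs
  · exact norm_mul_lt_one_of_lt_of_le hα hθ1
  · exact norm_mul_lt_one_of_lt_of_le hθ h2

end Field

end IsUltrametricDist

lemma Padic.norm_four_eq_one {p : ℕ} [Fact p.Prime] (hp : p ≠ 2) : ‖(4 : ℚ_[p])‖ = 1 := by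
  have hprime : p.Prime := Fact.out
  have hndvd : ¬p ∣ 2 ^ 2 := fun h ↦
    hp ((Nat.prime_dvd_prime_iff_eq hprime Nat.prime_two).mp (hprime.dvd_of_dvd_pow h))
  simpa using (Padic.norm_natCast_eq_one_iff (p := p) (n := 4)).mpr
    ((hprime.coprime_iff_not_dvd).mpr hndvd)

theorem potts_Fplus_maps_ball_general (p : ℕ) [Fact p.Prime] (hp : 3 ≤ p)
    (θ α : ℚ_[p]) (hθ : ‖θ - 1‖ ≤ 1 / (p : ℝ))
    (hα1 : ‖1 - α‖ ≤ 1 / (p : ℝ))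
    (L : ℕ → ℚ_[p])
    (hLlt : ∀ i, 2 ≤ i → ‖L i‖ < 1)
    (δ : ℝ)
    (hδub : ∀ i, 2 ≤ i → ‖L i‖ ≤ δ) (hδmax : ∃ i, 2 ≤ i ∧ ‖L i‖ = δ)
    (x : ℕ → ℚ_[p])
    (hxB : ∀ i, 2 ≤ i → ‖x i‖ ≤ δ)
    (X : ℚ_[p]) (hX : X = ∑' j : ℕ, x (j + 2))
    (sX : ℚ_[p])
    (hsX2 : ‖sX - 2‖ < 1) :
    ∀ i, 2 ≤ i →
      ‖L i * ((2 * (θ - 1) * x i + (α - 1) * θ + X + sX + 2) /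
          ((α + 1) * θ + X + sX))‖ = ‖L i‖ ∧ ‖L i‖ ≤ δ := by
  have hp_inv : 1 / (p : ℝ) < 1 := by
    rw [div_lt_one (by positivity)]
    exact_mod_cast (by omega : 1 < p)
  have hδ : δ < 1 := by
    obtain ⟨i, hi, rfl⟩ := hδmax
    exact hLlt i hi
  have h4 := Padic.norm_four_eq_one (p := p) (by omega)
  have hθ' : ‖θ - 1‖ < 1 := hθ.trans_lt hp_inv
  have hα' : ‖α - 1‖ < 1 := (norm_sub_rev α 1).trans_le hα1 |>.trans_lt hp_inv
  have hX' : ‖X‖ < 1 := hX ▸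
    (IsUltrametricDist.norm_tsum_le_of_forall_le fun j ↦ hxB (j + 2) (by omega)).trans_lt hδ
  intro i hi
  refine ⟨?_, hδub i hi⟩
  rw [norm_mul, norm_div,
    IsUltrametricDist.norm_pottsNumerator_eq_one h4 hθ' hα' hsX2 hX' ((hxB i hi).trans hδ.le),
    IsUltrametricDist.norm_pottsDenominator_eq_one h4 hθ' hα' hsX2 hX', div_one, mul_one]

/-- Under the conditions `|θ-1|_p ≤ 1/p`, `|α|_p = 1`,
`|1-α|_p ≤ 1/p` on the parameters, and with a weight `λ` satisfying
`λ(0) = 1`, `λ(1) = α`, `|λ(i)|_p < 1` for `i ≥ 2`, `|λ(i)|_p → 0`, and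
`δ = max_{i≥2} |λ(i)|_p > 0`, the map `F⁺` sends the ball `B_δ` into itself;
more precisely, for every `x ∈ B_δ` one has `|(F⁺(x))_i|_p = |λ(i)|_p ≤ δ`
for all `i ≥ 2`.  Here `X = Σ_{j≥2} x_j`, and `s_X` is the square root of
`D_X = (X + θ(1-α))² + 4α(X+1)` with `|s_X - 2|_p < 1`, and
`(F⁺(x))_i = λ(i)(2(θ-1)x_i + (α-1)θ + X + s_X + 2)/((α+1)θ + X + s_X)`. -/
theorem potts_Fplus_maps_ball (p : ℕ) [Fact p.Prime] (hp : 3 ≤ p)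
    (θ α : ℚ_[p]) (hθ : ‖θ - 1‖ ≤ 1 / (p : ℝ)) (hα : ‖α‖ = 1)
    (hα1 : ‖1 - α‖ ≤ 1 / (p : ℝ))
    (L : ℕ → ℚ_[p]) (hL0 : L 0 = 1) (hL1 : L 1 = α)
    (hLlt : ∀ i, 2 ≤ i → ‖L i‖ < 1)
    (hLten : Tendsto (fun i => ‖L i‖) atTop (nhds 0))
    (δ : ℝ) (hδpos : 0 < δ)
    (hδub : ∀ i, 2 ≤ i → ‖L i‖ ≤ δ) (hδmax : ∃ i, 2 ≤ i ∧ ‖L i‖ = δ)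
    (x : ℕ → ℚ_[p])
    (hxten : Tendsto (fun i => ‖x i‖) atTop (nhds 0))
    (hxB : ∀ i, 2 ≤ i → ‖x i‖ ≤ δ)
    (X : ℚ_[p]) (hX : X = ∑' j : ℕ, x (j + 2))
    (sX : ℚ_[p]) (hsX : sX ^ 2 = (X + θ * (1 - α)) ^ 2 + 4 * α * (X + 1))
    (hsX2 : ‖sX - 2‖ < 1) :
    ∀ i, 2 ≤ i →
      ‖L i * ((2 * (θ - 1) * x i + (α - 1) * θ + X + sX + 2) /
          ((α + 1) * θ + X + sX))‖ = ‖L i‖ ∧ ‖L i‖ ≤ δ :=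
  potts_Fplus_maps_ball_general p hp θ α hθ hα1 L hLlt δ hδub hδmax x hxB X hX sX hsX2
end

section
/- Let p ≥ 3 be prime and let α, θ, X ∈ ℚ_p satisfy |α|_p = 1, |1 − α|_p ≤ 1/p², |θ − 1|_p = 1/p and |X|_p ≤ 1/p². Let s ∈ ℚ_p be the unique square root of D_X = (X + θ(1−α))² + 4α(X+1) with |s − 2|_p < 1, and set x₋ := ((α − 1)θ − X − s)/2. Then |s − 2|_p ≤ 1/p², |x₋ + 1|_p ≤ 1/p², and |x₋ + X + θ|_p = |θ − 1|_p = 1/p. -/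
/-- For a prime `p ≥ 3` and `α, θ, X ∈ ℚ_p` with `|α|_p = 1`,
`|1-α|_p ≤ 1/p²`, `|θ-1|_p = 1/p`, `|X|_p ≤ 1/p²`, if `s` is the square root
of `D_X = (X + θ(1-α))² + 4α(X+1)` with `|s-2|_p < 1` and
`x₋ = ((α-1)θ - X - s)/2`, then `|s-2|_p ≤ 1/p²`, `|x₋+1|_p ≤ 1/p²`, and
`|x₋ + X + θ|_p = |θ-1|_p = 1/p`. -/
theorem potts_minus_root_estimates (p : ℕ) [Fact p.Prime] (hp : 3 ≤ p)
    (α θ X : ℚ_[p]) (hα : ‖α‖ = 1) (hα1 : ‖1 - α‖ ≤ 1 / (p : ℝ) ^ 2)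
    (hθ : ‖θ - 1‖ = 1 / (p : ℝ)) (hX : ‖X‖ ≤ 1 / (p : ℝ) ^ 2)
    (s : ℚ_[p]) (hs : s ^ 2 = (X + θ * (1 - α)) ^ 2 + 4 * α * (X + 1))
    (hs2 : ‖s - 2‖ < 1)
    (xm : ℚ_[p]) (hxm : xm = ((α - 1) * θ - X - s) / 2) :
    ‖s - 2‖ ≤ 1 / (p : ℝ) ^ 2 ∧ ‖xm + 1‖ ≤ 1 / (p : ℝ) ^ 2 ∧
      ‖xm + X + θ‖ = ‖θ - 1‖ ∧ ‖xm + X + θ‖ = 1 / (p : ℝ) := by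
  have hpR : (1:ℝ) < (p:ℝ) := by
    have : (3:ℝ) ≤ (p:ℝ) := by exact_mod_cast hp
    linarith
  have hpPos : (0:ℝ) < (p:ℝ) := by linarith
  have hq2pos : (0:ℝ) < 1 / (p:ℝ)^2 := by positivity
  have hq2le1 : 1 / (p:ℝ)^2 ≤ 1 := by
    rw [div_le_one (by positivity)]
    nlinarith
  have hq2ltq : 1 / (p:ℝ)^2 < 1 / (p:ℝ) := by
    apply div_lt_div_of_pos_left one_pos hpPos
    nlinarith
  have hqlt1 : 1 / (p:ℝ) < 1 := by
    rw [div_lt_one hpPos]; linarith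
  have subnon : ∀ a b : ℚ_[p], ‖a - b‖ ≤ max ‖a‖ ‖b‖ := fun a b => by
    rw [sub_eq_add_neg]
    simpa using Padic.nonarchimedean a (-b)
  -- norm of 2 is 1
  have h2 : ‖(2:ℚ_[p])‖ = 1 := by
    have hle : ‖((2:ℤ):ℚ_[p])‖ ≤ 1 := Padic.norm_int_le_one 2
    have hnlt : ¬ ‖((2:ℤ):ℚ_[p])‖ < 1 := by
      rw [Padic.norm_intCast_lt_one_iff]
      intro h
      have h2' := Int.le_of_dvd (by norm_num) h
      have : (3:ℤ) ≤ (p:ℤ) := by exact_mod_cast hp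
      omega
    have : ‖((2:ℤ):ℚ_[p])‖ = 1 := le_antisymm hle (not_lt.mp hnlt)
    simpa using this
  have h4 : ‖(4:ℚ_[p])‖ = 1 := by
    have : (4:ℚ_[p]) = 2 * 2 := by norm_num
    rw [this, norm_mul, h2]; ring
  -- norm of θ is 1
  have hθn : ‖θ‖ = 1 := by
    have : θ = 1 + (θ - 1) := by ring
    rw [this, Padic.add_eq_max_of_ne]
    · rw [hθ]; simp only [norm_one]; exact max_eq_left hqlt1.le
    · rw [hθ]; simp only [norm_one]; exact fun h => absurd h.symm (ne_of_lt hqlt1)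
  -- bound on X + θ(1-α)
  have hA : ‖X + θ * (1 - α)‖ ≤ 1 / (p:ℝ)^2 := by
    refine le_trans (Padic.nonarchimedean _ _) (max_le hX ?_)
    rw [norm_mul, hθn, one_mul]; exact hα1
  have hB : ‖(X + θ * (1 - α))^2‖ ≤ 1 / (p:ℝ)^2 := by
    rw [norm_pow]
    calc ‖X + θ * (1 - α)‖^2 ≤ (1 / (p:ℝ)^2) * (1 / (p:ℝ)^2) := by
            rw [sq]; exact mul_le_mul hA hA (norm_nonneg _) (le_of_lt hq2pos)
      _ ≤ 1 * (1 / (p:ℝ)^2) := by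
            exact mul_le_mul_of_nonneg_right hq2le1 (le_of_lt hq2pos)
      _ = 1 / (p:ℝ)^2 := one_mul _
  -- bound on 4α(X+1) - 4
  have hC : ‖4 * α * (X + 1) - 4‖ ≤ 1 / (p:ℝ)^2 := by
    have heq : 4 * α * (X + 1) - 4 = 4 * α * X + 4 * (α - 1) := by ring
    rw [heq]
    refine le_trans (Padic.nonarchimedean _ _) (max_le ?_ ?_)
    · rw [norm_mul, norm_mul, h4, hα, one_mul, one_mul]; exact hX
    · rw [norm_mul, h4, one_mul, ← norm_neg]
      have : -(α - 1) = 1 - α := by ring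
      rw [this]; exact hα1
  -- bound on s² - 4
  have hs24 : ‖s^2 - 4‖ ≤ 1 / (p:ℝ)^2 := by
    have : s^2 - 4 = (X + θ * (1 - α))^2 + (4 * α * (X + 1) - 4) := by
      rw [hs]; ring
    rw [this]
    exact le_trans (Padic.nonarchimedean _ _) (max_le hB hC)
  -- norm of s + 2 is 1
  have hsp2 : ‖s + 2‖ = 1 := by
    have : s + 2 = 4 + (s - 2) := by ring
    rw [this, Padic.add_eq_max_of_ne]
    · rw [h4]; exact max_eq_left (le_of_lt (h4 ▸ hs2))
    · rw [h4]; exact fun h => absurd h.symm (ne_of_lt hs2)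
  -- first claim
  have hsm2 : ‖s - 2‖ ≤ 1 / (p:ℝ)^2 := by
    have hfac : s^2 - 4 = (s - 2) * (s + 2) := by ring
    have := hs24
    rw [hfac, norm_mul, hsp2, mul_one] at this
    exact this
  refine ⟨hsm2, ?_, ?_, ?_⟩
  · -- ‖xm + 1‖ ≤ 1/p²
    have heq : xm + 1 = ((α - 1) * θ - X - (s - 2)) / 2 := by
      rw [hxm]; ring
    rw [heq, norm_div, h2, div_one]
    have h1 : ‖(α - 1) * θ‖ ≤ 1 / (p:ℝ)^2 := by
      rw [norm_mul, hθn, mul_one, ← norm_neg]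
      have : -(α - 1) = 1 - α := by ring
      rw [this]; exact hα1
    have h2' : ‖(α - 1) * θ - X‖ ≤ 1 / (p:ℝ)^2 := by
      refine le_trans (subnon _ _) (max_le h1 hX)
    exact le_trans (subnon _ _) (max_le h2' hsm2)
  · -- ‖xm + X + θ‖ = ‖θ - 1‖
    have heq : xm + X + θ = (2 * (θ - 1) + ((α - 1) * θ + X - (s - 2))) / 2 := by
      rw [hxm]; ring
    have ht : ‖(α - 1) * θ + X - (s - 2)‖ ≤ 1 / (p:ℝ)^2 := by
      have h1 : ‖(α - 1) * θ‖ ≤ 1 / (p:ℝ)^2 := by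
        rw [norm_mul, hθn, mul_one, ← norm_neg]
        have : -(α - 1) = 1 - α := by ring
        rw [this]; exact hα1
      have h2' : ‖(α - 1) * θ + X‖ ≤ 1 / (p:ℝ)^2 :=
        le_trans (Padic.nonarchimedean _ _) (max_le h1 hX)
      exact le_trans (subnon _ _) (max_le h2' hsm2)
    have h2θ : ‖2 * (θ - 1)‖ = 1 / (p:ℝ) := by
      rw [norm_mul, h2, one_mul, hθ]
    rw [heq, norm_div, h2, div_one, Padic.add_eq_max_of_ne]
    · rw [h2θ, hθ]
      exact max_eq_left (le_of_lt (lt_of_le_of_lt ht hq2ltq))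
    · rw [h2θ]
      exact ne_of_gt (lt_of_le_of_lt ht hq2ltq)
  · -- last, combine
    have heq : xm + X + θ = (2 * (θ - 1) + ((α - 1) * θ + X - (s - 2))) / 2 := by
      rw [hxm]; ring
    have ht : ‖(α - 1) * θ + X - (s - 2)‖ ≤ 1 / (p:ℝ)^2 := by
      have h1 : ‖(α - 1) * θ‖ ≤ 1 / (p:ℝ)^2 := by
        rw [norm_mul, hθn, mul_one, ← norm_neg]
        have : -(α - 1) = 1 - α := by ring
        rw [this]; exact hα1
      have h2' : ‖(α - 1) * θ + X‖ ≤ 1 / (p:ℝ)^2 :=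
        le_trans (Padic.nonarchimedean _ _) (max_le h1 hX)
      exact le_trans (subnon _ _) (max_le h2' hsm2)
    have h2θ : ‖2 * (θ - 1)‖ = 1 / (p:ℝ) := by
      rw [norm_mul, h2, one_mul, hθ]
    rw [heq, norm_div, h2, div_one, Padic.add_eq_max_of_ne]
    · rw [h2θ]
      exact max_eq_left (le_of_lt (lt_of_le_of_lt ht hq2ltq))
    · rw [h2θ]
      exact ne_of_gt (lt_of_le_of_lt ht hq2ltq)
end

section
/- Let p ≥ 3 be prime, θ, α ∈ ℚ_p with |θ − 1|_p = 1/p, |α|_p = 1, |1 − α|_p ≤ 1/p², and let λ be a weight with λ(0) = 1, λ(1) = α, |λ(i)|_p < 1 for i ≥ 2, |λ(i)|_p → 0, δ := max_{i≥2}|λ(i)|_p > 0. Then F⁻ maps B_{δ/p} into B_{δ/p}; more precisely, for every x ∈ B_{δ/p} one has |(F⁻(x))_i|_p ≤ |λ(i)|_p/p ≤ δ/p for all i ≥ 2. -/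
open Filter

/-!
Put `ε = 1/p`. As `p` is odd and `‖s - 2‖ < 1`, we have `‖s + 2‖ = 1`, so the identities
`(s - 2)(s + 2) = (X + θ(1 - α))² + 4X - 4(1 - α)X - 4(1 - α)` and
`(X - s + 2)(s + 2) = X(s - 2) - (X + θ(1 - α))² + 4(1 - α)X + 4(1 - α)`
give first `‖s - 2‖ ≤ ε` and then `‖X - s + 2‖ ≤ ε²`. Writing `c = (α - 1)θ + (X - s + 2)`,
the numerator of `F⁻` is `2(θ - 1)xᵢ + c`, of norm at most `ε²`, while the denominator
`2(θ - 1) + c` has norm exactly `ε`, since its first term dominates.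
-/

lemma norm_four_eq_one_of_norm_two_eq_one {K : Type*} [NormedField K] (h2 : ‖(2 : K)‖ = 1) :
    ‖(4 : K)‖ = 1 := by
  rw [show (4 : K) = 2 * 2 by norm_num, norm_mul, h2, one_mul]

namespace IsUltrametricDist

variable {K : Type*} [NormedField K] [IsUltrametricDist K]

lemma norm_add_le_of_norm_le_of_norm_le {a b : K} {r : ℝ} (ha : ‖a‖ ≤ r) (hb : ‖b‖ ≤ r) :
    ‖a + b‖ ≤ r :=
  (norm_add_le_max a b).trans (max_le ha hb)

lemma norm_le_one_of_norm_sub_one_le_one {a : K} (h : ‖a - 1‖ ≤ 1) : ‖a‖ ≤ 1 := by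
  simpa using (norm_add_one_le_max_norm_one (a - 1)).trans (max_le h le_rfl)

lemma norm_add_two_eq_one (h2 : ‖(2 : K)‖ = 1) {s : K} (hs : ‖s - 2‖ < 1) : ‖s + 2‖ = 1 := by
  have h4 := norm_four_eq_one_of_norm_two_eq_one h2
  rw [show s + 2 = (s - 2) + 4 by ring,
    norm_add_eq_max_of_norm_ne_norm (by rw [h4]; exact hs.ne), h4, max_eq_right hs.le]

end IsUltrametricDist

namespace PottsFminus

open IsUltrametricDist

variable {K : Type*} [NormedField K] [IsUltrametricDist K] {ε : ℝ} {X θ α s : K}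

lemma norm_add_mul_one_sub_le (hε : ε ≤ 1) (hX : ‖X‖ ≤ ε) (hθ : ‖θ‖ ≤ 1)
    (hα : ‖1 - α‖ ≤ ε ^ 2) : ‖X + θ * (1 - α)‖ ≤ ε := by
  refine norm_add_le_of_norm_le_of_norm_le hX ?_
  rw [norm_mul]
  nlinarith [norm_nonneg X, norm_nonneg θ, norm_nonneg (1 - α)]

lemma norm_sqrt_sub_two_le (h2 : ‖(2 : K)‖ = 1) (hε : ε ≤ 1) (hX : ‖X‖ ≤ ε) (hθ : ‖θ‖ ≤ 1)
    (hα : ‖1 - α‖ ≤ ε ^ 2) (hs : s ^ 2 = (X + θ * (1 - α)) ^ 2 + 4 * α * (X + 1))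
    (hs2 : ‖s - 2‖ < 1) : ‖s - 2‖ ≤ ε := by
  have h4 := norm_four_eq_one_of_norm_two_eq_one h2
  have hu := norm_add_mul_one_sub_le hε hX hθ hα
  have hε0 : 0 ≤ ε := (norm_nonneg X).trans hX
  have key : (s - 2) * (s + 2) =
      (X + θ * (1 - α)) ^ 2 + 4 * X + (-(4 * (1 - α) * X) + -(4 * (1 - α))) := by
    linear_combination hs
  rw [← mul_one ‖s - 2‖, ← norm_add_two_eq_one h2 hs2, ← norm_mul, key]
  refine norm_add_le_of_norm_le_of_norm_le (norm_add_le_of_norm_le_of_norm_le ?_ ?_)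
    (norm_add_le_of_norm_le_of_norm_le ?_ ?_) <;>
  simp only [norm_neg, norm_mul, norm_pow, h4, one_mul] <;>
  nlinarith [norm_nonneg X, norm_nonneg (1 - α), norm_nonneg (X + θ * (1 - α))]

lemma norm_sub_sqrt_add_two_le (h2 : ‖(2 : K)‖ = 1) (hε : ε ≤ 1) (hX : ‖X‖ ≤ ε)
    (hθ : ‖θ‖ ≤ 1) (hα : ‖1 - α‖ ≤ ε ^ 2)
    (hs : s ^ 2 = (X + θ * (1 - α)) ^ 2 + 4 * α * (X + 1)) (hs2 : ‖s - 2‖ < 1) :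
    ‖X - s + 2‖ ≤ ε ^ 2 := by
  have h4 := norm_four_eq_one_of_norm_two_eq_one h2
  have hu := norm_add_mul_one_sub_le hε hX hθ hα
  have hs2' := norm_sqrt_sub_two_le h2 hε hX hθ hα hs hs2
  have hε0 : 0 ≤ ε := (norm_nonneg X).trans hX
  have key : (X - s + 2) * (s + 2) =
      X * (s - 2) + -(X + θ * (1 - α)) ^ 2 + (4 * (1 - α) * X + 4 * (1 - α)) := by
    linear_combination -hs
  rw [← mul_one ‖X - s + 2‖, ← norm_add_two_eq_one h2 hs2, ← norm_mul, key]
  refine norm_add_le_of_norm_le_of_norm_le (norm_add_le_of_norm_le_of_norm_le ?_ ?_)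
    (norm_add_le_of_norm_le_of_norm_le ?_ ?_) <;>
  simp only [norm_neg, norm_mul, norm_pow, h4, one_mul] <;>
  nlinarith [norm_nonneg X, norm_nonneg (1 - α), norm_nonneg (X + θ * (1 - α)),
    norm_nonneg (s - 2)]

lemma norm_Fminus_factor_le (h2 : ‖(2 : K)‖ = 1) (hε0 : 0 < ε) (hε1 : ε < 1)
    (hθ : ‖θ - 1‖ = ε) (hα : ‖1 - α‖ ≤ ε ^ 2) (hX : ‖X‖ ≤ ε)
    (hs : s ^ 2 = (X + θ * (1 - α)) ^ 2 + 4 * α * (X + 1)) (hs2 : ‖s - 2‖ < 1)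
    {y : K} (hy : ‖y‖ ≤ ε) :
    ‖(2 * (θ - 1) * y + (α - 1) * θ + X - s + 2) / ((α + 1) * θ + X - s)‖ ≤ ε := by
  have hθ1 : ‖θ‖ ≤ 1 := norm_le_one_of_norm_sub_one_le_one (hθ.trans_le hε1.le)
  have hεε : ε ^ 2 < ε := by nlinarith
  have hc : ‖(α - 1) * θ + (X - s + 2)‖ ≤ ε ^ 2 := by
    refine norm_add_le_of_norm_le_of_norm_le ?_
      (norm_sub_sqrt_add_two_le h2 hε1.le hX hθ1 hα hs hs2)
    rw [norm_mul, ← norm_neg, neg_sub]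
    nlinarith [norm_nonneg θ, norm_nonneg (1 - α)]
  have hlead : ‖2 * (θ - 1)‖ = ε := by rw [norm_mul, h2, one_mul, hθ]
  have hnum : ‖2 * (θ - 1) * y + ((α - 1) * θ + (X - s + 2))‖ ≤ ε ^ 2 := by
    refine norm_add_le_of_norm_le_of_norm_le ?_ hc
    rw [norm_mul, hlead]
    nlinarith
  have hden : ‖2 * (θ - 1) + ((α - 1) * θ + (X - s + 2))‖ = ε := by
    rw [norm_add_eq_max_of_norm_ne_norm (by rw [hlead]; exact (hc.trans_lt hεε).ne'), hlead,
      max_eq_left (hc.trans hεε.le)]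
  rw [show 2 * (θ - 1) * y + (α - 1) * θ + X - s + 2 =
      2 * (θ - 1) * y + ((α - 1) * θ + (X - s + 2)) by ring,
    show (α + 1) * θ + X - s = 2 * (θ - 1) + ((α - 1) * θ + (X - s + 2)) by ring,
    norm_div, hden, div_le_iff₀ hε0, ← sq]
  exact hnum

end PottsFminus

theorem potts_Fminus_maps_ball_general (p : ℕ) [Fact p.Prime] (hp : 3 ≤ p)
    (θ α : ℚ_[p]) (hθ : ‖θ - 1‖ = 1 / (p : ℝ))
    (hα1 : ‖1 - α‖ ≤ 1 / (p : ℝ) ^ 2)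
    (L : ℕ → ℚ_[p])
    (hLlt : ∀ i, 2 ≤ i → ‖L i‖ < 1)
    (δ : ℝ)
    (hδub : ∀ i, 2 ≤ i → ‖L i‖ ≤ δ) (hδmax : ∃ i, 2 ≤ i ∧ ‖L i‖ = δ)
    (x : ℕ → ℚ_[p])
    (hxB : ∀ i, 2 ≤ i → ‖x i‖ ≤ δ / (p : ℝ))
    (X : ℚ_[p]) (hX : X = ∑' j : ℕ, x (j + 2))
    (sX : ℚ_[p]) (hsX : sX ^ 2 = (X + θ * (1 - α)) ^ 2 + 4 * α * (X + 1))
    (hsX2 : ‖sX - 2‖ < 1) :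
    ∀ i, 2 ≤ i →
      ‖L i * ((2 * (θ - 1) * x i + (α - 1) * θ + X - sX + 2) /
          ((α + 1) * θ + X - sX))‖ ≤ ‖L i‖ / (p : ℝ) ∧
      ‖L i‖ / (p : ℝ) ≤ δ / (p : ℝ) := by
  intro i hi
  have hp1 : (1 : ℝ) < p := by exact_mod_cast (Fact.out : p.Prime).one_lt
  have h2 : ‖(2 : ℚ_[p])‖ = 1 := by
    exact_mod_cast Padic.norm_natCast_eq_one_iff.2
      ((Nat.coprime_primes Fact.out Nat.prime_two).2 (by omega))
  have hδp : δ / p ≤ 1 / p := by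
    obtain ⟨j, hj, rfl⟩ := hδmax
    gcongr
    exact (hLlt j hj).le
  have hXp : ‖X‖ ≤ 1 / p := hX ▸ (IsUltrametricDist.norm_tsum_le_of_forall_le_of_nonneg
    ((norm_nonneg _).trans (hxB 2 le_rfl)) fun j => hxB _ (by omega)).trans hδp
  refine ⟨?_, by gcongr; exact hδub i hi⟩
  rw [norm_mul, ← mul_one_div (‖L i‖)]
  gcongr
  exact PottsFminus.norm_Fminus_factor_le h2 (by positivity) ((div_lt_one (by positivity)).2 hp1)
    hθ (by rwa [div_pow, one_pow]) hXp hsX hsX2 ((hxB i hi).trans hδp)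

/-- Under the conditions `|θ-1|_p = 1/p`, `|α|_p = 1`,
`|1-α|_p ≤ 1/p²`, and with a weight `λ` satisfying `λ(0) = 1`, `λ(1) = α`,
`|λ(i)|_p < 1` for `i ≥ 2`, `|λ(i)|_p → 0`, `δ = max_{i≥2}|λ(i)|_p > 0`,
the map `F⁻` sends the ball `B_{δ/p}` into itself; more precisely, for every
`x ∈ B_{δ/p}` one has `|(F⁻(x))_i|_p ≤ |λ(i)|_p/p ≤ δ/p` for all `i ≥ 2`.
Here `X = Σ_{j≥2} x_j`, `s_X` is the square root of
`D_X = (X + θ(1-α))² + 4α(X+1)` with `|s_X - 2|_p < 1`, and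
`(F⁻(x))_i = λ(i)(2(θ-1)x_i + (α-1)θ + X - s_X + 2)/((α+1)θ + X - s_X)`. -/
theorem potts_Fminus_maps_ball (p : ℕ) [Fact p.Prime] (hp : 3 ≤ p)
    (θ α : ℚ_[p]) (hθ : ‖θ - 1‖ = 1 / (p : ℝ)) (hα : ‖α‖ = 1)
    (hα1 : ‖1 - α‖ ≤ 1 / (p : ℝ) ^ 2)
    (L : ℕ → ℚ_[p]) (hL0 : L 0 = 1) (hL1 : L 1 = α)
    (hLlt : ∀ i, 2 ≤ i → ‖L i‖ < 1)
    (hLten : Tendsto (fun i => ‖L i‖) atTop (nhds 0))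
    (δ : ℝ) (hδpos : 0 < δ)
    (hδub : ∀ i, 2 ≤ i → ‖L i‖ ≤ δ) (hδmax : ∃ i, 2 ≤ i ∧ ‖L i‖ = δ)
    (x : ℕ → ℚ_[p])
    (hxten : Tendsto (fun i => ‖x i‖) atTop (nhds 0))
    (hxB : ∀ i, 2 ≤ i → ‖x i‖ ≤ δ / (p : ℝ))
    (X : ℚ_[p]) (hX : X = ∑' j : ℕ, x (j + 2))
    (sX : ℚ_[p]) (hsX : sX ^ 2 = (X + θ * (1 - α)) ^ 2 + 4 * α * (X + 1))
    (hsX2 : ‖sX - 2‖ < 1) :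
    ∀ i, 2 ≤ i →
      ‖L i * ((2 * (θ - 1) * x i + (α - 1) * θ + X - sX + 2) /
          ((α + 1) * θ + X - sX))‖ ≤ ‖L i‖ / (p : ℝ) ∧
      ‖L i‖ / (p : ℝ) ≤ δ / (p : ℝ) :=
  potts_Fminus_maps_ball_general p hp θ α hθ hα1 L hLlt δ hδub hδmax x hxB X hX sX hsX hsX2
end

section
/- Let p ≥ 3 be prime, θ, α ∈ ℚ_p with |θ − 1|_p = 1/p, |α|_p = 1, |1 − α|_p ≤ 1/p², and let λ be a weight with λ(0) = 1, λ(1) = α, |λ(i)|_p < 1 for i ≥ 2, |λ(i)|_p → 0, δ := max_{i≥2}|λ(i)|_p > 0. Then the translation-invariant equation ĥ_i = λ(i)·((θ − 1)ĥ_i + S + 1)/(S + θ) for all i ≥ 1, where S := Σ_{j≥1} ĥ_j (with S + θ ≠ 0), has two distinct solutions ĥ⁺ = (ĥ⁺_i)_{i≥1} and ĥ⁻ = (ĥ⁻_i)_{i≥1} with |ĥ_i|_p → 0, satisfying |ĥ⁺_1 − 1|_p ≤ 1/p, |ĥ⁻_1 + 1|_p ≤ 1/p², |ĥ⁺_1 −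 ĥ⁻_1|_p = 1, |ĥ⁺_i − ĥ⁻_i|_p = |λ(i)|_p for all i ≥ 2, and sup_{i≥2} |ĥ⁺_i − ĥ⁻_i|_p = δ. (This is the phase transition: the two solutions define two different generalized p-adic Gibbs measures for the countable-state one-dimensional p-adic Potts model.) -/
open Filter

section PottsAux

open Metric

variable {p : ℕ} [Fact p.Prime]

lemma myNormAddEqLeft (x y : ℚ_[p]) (h : ‖y‖ < ‖x‖) : ‖x + y‖ = ‖x‖ := by
  rw [Padic.add_eq_max_of_ne (ne_of_gt h), max_eq_left h.le]

lemma myNormAdd2 {x y : ℚ_[p]} {C : ℝ} (hx : ‖x‖ ≤ C) (hy : ‖y‖ ≤ C) : ‖x + y‖ ≤ C :=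
  le_trans (Padic.nonarchimedean _ _) (max_le hx hy)

lemma myNormSub2 {x y : ℚ_[p]} {C : ℝ} (hx : ‖x‖ ≤ C) (hy : ‖y‖ ≤ C) : ‖x - y‖ ≤ C := by
  rw [sub_eq_add_neg]; exact myNormAdd2 hx (by rwa [norm_neg])

lemma myNormSum4 {a b c d : ℚ_[p]} {C : ℝ} (ha : ‖a‖ ≤ C) (hb : ‖b‖ ≤ C)
    (hc : ‖c‖ ≤ C) (hd : ‖d‖ ≤ C) : ‖a + b - c - d‖ ≤ C :=
  myNormSub2 (myNormSub2 (myNormAdd2 ha hb) hc) hd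

lemma myNormTwo (hp : 3 ≤ p) : ‖(2 : ℚ_[p])‖ = 1 := by
  have h2 : ((2 : ℤ) : ℚ_[p]) = (2 : ℚ_[p]) := by norm_cast
  have hle : ‖(2 : ℚ_[p])‖ ≤ 1 := by rw [← h2]; exact Padic.norm_int_le_one 2
  rcases lt_or_eq_of_le hle with h | h
  · exfalso
    rw [← h2, Padic.norm_intCast_lt_one_iff] at h
    have := Int.le_of_dvd (by norm_num) h
    omega
  · exact h

lemma mySmall (x : ℚ_[p]) (h : ‖x‖ < 1) : ‖x‖ ≤ ((p : ℝ))⁻¹ := by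
  have h1 := (Padic.norm_le_pow_iff_norm_lt_pow_add_one x (-1)).2
  simp only [neg_add_cancel, zpow_zero] at h1
  have h2 := h1 h
  rwa [zpow_neg_one] at h2

lemma myFixedPoint (F : ℚ_[p] → ℚ_[p]) (c : ℚ_[p]) (r k : ℝ)
    (hr : 0 ≤ r) (hk0 : 0 ≤ k) (hk : k < 1)
    (hmaps : ∀ x, ‖x - c‖ ≤ r → ‖F x - c‖ ≤ r)
    (hlip : ∀ x y, ‖x - c‖ ≤ r → ‖y - c‖ ≤ r → ‖F x - F y‖ ≤ k * ‖x - y‖) :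
    ∃ x : ℚ_[p], ‖x - c‖ ≤ r ∧ F x = x := by
  have hsc : IsComplete (closedBall c r) := Metric.isClosed_closedBall.isComplete
  have hsf : Set.MapsTo F (closedBall c r) (closedBall c r) := by
    intro x hx
    rw [mem_closedBall, dist_eq_norm] at *
    exact hmaps x hx
  have hcw : ContractingWith ⟨k, hk0⟩ (hsf.restrict F _ _) := by
    constructor
    · exact_mod_cast hk
    · apply LipschitzWith.of_dist_le_mul
      rintro ⟨x, hx⟩ ⟨y, hy⟩
      simp only [Subtype.dist_eq, Set.MapsTo.val_restrict_apply, dist_eq_norm, NNReal.coe_mk]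
      rw [mem_closedBall, dist_eq_norm] at hx hy
      exact hlip x y hx hy
  obtain ⟨y, hy, hfix, -⟩ := hcw.exists_fixedPoint' hsc hsf
    (Metric.mem_closedBall_self hr) (edist_ne_top _ _)
  rw [mem_closedBall, dist_eq_norm] at hy
  exact ⟨y, hy, hfix⟩

lemma myAlgebra {K : Type*} [Field K] (a S t x : K)
    (hS : S + t ≠ 0)
    (key : x * (S + t - a * (t - 1)) = a * (S + 1)) :
    x = a * (((t - 1) * x + S + 1) / (S + t)) := by
  field_simp
  linear_combination key

lemma mySummable (L : ℕ → ℚ_[p]) (hLten : Tendsto (fun i => ‖L i‖) atTop (nhds 0))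
    (g : ℕ → ℚ_[p]) (C : ℝ) (m : ℕ) (hg : ∀ i, ‖g i‖ ≤ C * ‖L (i + m)‖) : Summable g := by
  apply NonarchimedeanAddGroup.summable_of_tendsto_cofinite_zero
  rw [Nat.cofinite_eq_atTop, tendsto_zero_iff_norm_tendsto_zero]
  apply squeeze_zero (fun i => norm_nonneg _) hg
  have := (hLten.comp (tendsto_add_atTop_nat m)).const_mul C
  simpa using this

end PottsAux

/-- Phase transition: Let `p ≥ 3` be prime, `θ, α ∈ ℚ_p` with
`|θ-1|_p = 1/p`, `|α|_p = 1`, `|1-α|_p ≤ 1/p²`, and let `λ` be a weight with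
`λ(0) = 1`, `λ(1) = α`, `|λ(i)|_p < 1` for `i ≥ 2`, `|λ(i)|_p → 0`,
`δ = max_{i≥2}|λ(i)|_p > 0`.  Then the translation-invariant equation
`ĥ_i = λ(i)((θ-1)ĥ_i + S + 1)/(S + θ)` for `i ≥ 1`, with `S = Σ_{j≥1} ĥ_j`
(and `S + θ ≠ 0`), has two distinct solutions `ĥ⁺`, `ĥ⁻` tending to `0`,
with `|ĥ⁺₁ - 1|_p ≤ 1/p`, `|ĥ⁻₁ + 1|_p ≤ 1/p²`, `|ĥ⁺₁ - ĥ⁻₁|_p = 1`,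
`|ĥ⁺_i - ĥ⁻_i|_p = |λ(i)|_p` for `i ≥ 2`, and `sup_{i≥2}|ĥ⁺_i - ĥ⁻_i|_p = δ`. -/
theorem potts_phase_transition (p : ℕ) [Fact p.Prime] (hp : 3 ≤ p)
    (θ α : ℚ_[p]) (hθ : ‖θ - 1‖ = 1 / (p : ℝ)) (hα : ‖α‖ = 1)
    (hα1 : ‖1 - α‖ ≤ 1 / (p : ℝ) ^ 2)
    (L : ℕ → ℚ_[p]) (hL0 : L 0 = 1) (hL1 : L 1 = α)
    (hLlt : ∀ i, 2 ≤ i → ‖L i‖ < 1)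
    (hLten : Tendsto (fun i => ‖L i‖) atTop (nhds 0))
    (δ : ℝ) (hδpos : 0 < δ)
    (hδub : ∀ i, 2 ≤ i → ‖L i‖ ≤ δ) (hδmax : ∃ i, 2 ≤ i ∧ ‖L i‖ = δ) :
    ∃ hP hM : ℕ → ℚ_[p],
      hP ≠ hM ∧
      Tendsto (fun i => ‖hP i‖) atTop (nhds 0) ∧
      Tendsto (fun i => ‖hM i‖) atTop (nhds 0) ∧
      (∑' j : ℕ, hP (j + 1)) + θ ≠ 0 ∧
      (∑' j : ℕ, hM (j + 1)) + θ ≠ 0 ∧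
      (∀ i, 1 ≤ i → hP i =
        L i * (((θ - 1) * hP i + (∑' j : ℕ, hP (j + 1)) + 1) /
          ((∑' j : ℕ, hP (j + 1)) + θ))) ∧
      (∀ i, 1 ≤ i → hM i =
        L i * (((θ - 1) * hM i + (∑' j : ℕ, hM (j + 1)) + 1) /
          ((∑' j : ℕ, hM (j + 1)) + θ))) ∧
      ‖hP 1 - 1‖ ≤ 1 / (p : ℝ) ∧
      ‖hM 1 + 1‖ ≤ 1 / (p : ℝ) ^ 2 ∧
      ‖hP 1 - hM 1‖ = 1 ∧
      (∀ i, 2 ≤ i → ‖hP i - hM i‖ = ‖L i‖) ∧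
      (⨆ i : ℕ, ‖hP (i + 2) - hM (i + 2)‖) = δ := by
  have hprime : p.Prime := Fact.out
  have hp1 : (1 : ℝ) < p := by exact_mod_cast hprime.one_lt
  set ip : ℝ := ((p : ℝ))⁻¹ with hip_def
  clear_value ip
  have hip0 : 0 < ip := by rw [hip_def]; exact inv_pos.mpr (by linarith)
  have hip1 : ip < 1 := by rw [hip_def]; exact inv_lt_one_of_one_lt₀ hp1
  have hip2le : ip ^ 2 ≤ ip := by nlinarith
  have hip3le2 : ip ^ 3 ≤ ip ^ 2 := by nlinarith
  have hip3le : ip ^ 3 ≤ ip := le_trans hip3le2 hip2le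
  have hip3lt : ip ^ 3 < ip := by nlinarith
  have hip2lt : ip ^ 2 < 1 := by nlinarith
  have hip3pos : 0 < ip ^ 3 := by positivity
  have hθ' : ‖θ - 1‖ = ip := by rw [hθ, one_div]; exact hip_def.symm
  have hip3le1 : ip ^ 3 ≤ 1 := by nlinarith
  have hipsq : ip ^ 2 = 1 / (p : ℝ) ^ 2 := by rw [hip_def, inv_pow, one_div]
  have hα1' : ‖1 - α‖ ≤ ip ^ 2 := by rw [hipsq]; exact hα1
  have norm2 : ‖(2 : ℚ_[p])‖ = 1 := myNormTwo hp
  have hδle : δ ≤ ip := by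
    obtain ⟨i, hi2, hieq⟩ := hδmax
    rw [← hieq, hip_def]; exact mySmall _ (hLlt i hi2)
  set A : ℕ → ℚ_[p] := fun i => (θ - 1) * (1 - L i) with hA
  clear_value A
  have hL1n : ‖L 1‖ = 1 := by rw [hL1, hα]
  have h1mL : ∀ i, 2 ≤ i → ‖(1 : ℚ_[p]) - L i‖ = 1 := by
    intro i hi
    have e : (1 : ℚ_[p]) - L i = 1 + (-(L i)) := by ring
    rw [e, myNormAddEqLeft, norm_one]
    rw [norm_neg, norm_one]
    exact hLlt i hi
  have hA1 : ‖A 1‖ ≤ ip ^ 3 := by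
    simp only [hA]
    rw [norm_mul, hθ', hL1]
    calc ip * ‖1 - α‖ ≤ ip * ip ^ 2 := mul_le_mul_of_nonneg_left hα1' hip0.le
    _ = ip ^ 3 := by ring
  have hA2 : ∀ i, 2 ≤ i → ‖A i‖ = ip := by
    intro i hi
    simp only [hA]
    rw [norm_mul, hθ', h1mL i hi, mul_one]
  have hAle : ∀ i, 1 ≤ i → ‖A i‖ ≤ ip := by
    intro i hi
    rcases eq_or_lt_of_le hi with h1 | h2
    · rw [← h1]; exact le_trans hA1 hip3le
    · rw [hA2 i h2]
  have hLle : ∀ i, 1 ≤ i → ‖L i‖ ≤ 1 := by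
    intro i hi
    rcases eq_or_lt_of_le hi with h1 | h2
    · rw [← h1, hL1n]
    · exact (hLlt i h2).le
  have hLip : ∀ i, 2 ≤ i → ‖L i‖ ≤ ip := fun i hi => by
    rw [hip_def]; exact mySmall _ (hLlt i hi)
  have hLA : ∀ i, 1 ≤ i → ‖L i‖ * ‖A i‖ ≤ ip := by
    intro i hi
    calc ‖L i‖ * ‖A i‖ ≤ 1 * ip := by
          apply mul_le_mul (hLle i hi) (hAle i hi) (norm_nonneg _) zero_le_one
    _ = ip := one_mul ip
  -- ################ PLUS SOLUTION ################
  set Fp : ℚ_[p] → ℚ_[p] := fun S => ∑' i : ℕ, L (i + 1) * (S + 1) / (A (i + 1) + (S + 1))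
    with hFp
  clear_value Fp
  have hu : ∀ S : ℚ_[p], ‖S - 1‖ ≤ ip → ‖S + 1‖ = 1 := by
    intro S hS
    have e : S + 1 = 2 + (S - 1) := by ring
    rw [e, myNormAddEqLeft, norm2]
    rw [norm2]; exact lt_of_le_of_lt hS hip1
  have hdenP : ∀ S : ℚ_[p], ‖S - 1‖ ≤ ip → ∀ i, 1 ≤ i → ‖A i + (S + 1)‖ = 1 := by
    intro S hS i hi
    have e : A i + (S + 1) = (S + 1) + A i := by ring
    rw [e, myNormAddEqLeft, hu S hS]
    rw [hu S hS]; exact lt_of_le_of_lt (hAle i hi) hip1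
  have hdenP0 : ∀ S : ℚ_[p], ‖S - 1‖ ≤ ip → ∀ i, 1 ≤ i → A i + (S + 1) ≠ 0 := by
    intro S hS i hi h0
    have := hdenP S hS i hi
    rw [h0, norm_zero] at this
    norm_num at this
  have htermP : ∀ S : ℚ_[p], ‖S - 1‖ ≤ ip → ∀ i, 1 ≤ i →
      ‖L i * (S + 1) / (A i + (S + 1))‖ = ‖L i‖ := by
    intro S hS i hi
    rw [norm_div, norm_mul, hu S hS, hdenP S hS i hi, mul_one, div_one]
  have hsumP : ∀ S : ℚ_[p], ‖S - 1‖ ≤ ip →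
      Summable (fun i : ℕ => L (i + 1) * (S + 1) / (A (i + 1) + (S + 1))) := by
    intro S hS
    apply mySummable L hLten _ 1 1
    intro i
    rw [htermP S hS (i + 1) (by omega), one_mul]
  have hfirst : ∀ S : ℚ_[p], ‖S - 1‖ ≤ ip →
      ‖L 1 * (S + 1) / (A 1 + (S + 1)) - 1‖ ≤ ip ^ 2 := by
    intro S hS
    have hd0 := hdenP0 S hS 1 le_rfl
    have e : L 1 * (S + 1) / (A 1 + (S + 1)) - 1
        = ((α - 1) * (S + 1) + (-(A 1))) / (A 1 + (S + 1)) := by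
      rw [hL1]
      field_simp
      ring
    rw [e, norm_div, hdenP S hS 1 le_rfl, div_one]
    apply myNormAdd2
    · rw [norm_mul, hu S hS, mul_one, norm_sub_rev]
      exact hα1'
    · rw [norm_neg]; exact le_trans hA1 hip3le2
  have hFp_maps : ∀ S : ℚ_[p], ‖S - 1‖ ≤ ip → ‖Fp S - 1‖ ≤ ip := by
    intro S hS
    have hsum := hsumP S hS
    have e2 : Fp S - 1 = (L (0 + 1) * (S + 1) / (A (0 + 1) + (S + 1)) - 1)
        + ∑' i : ℕ, L (i + 1 + 1) * (S + 1) / (A (i + 1 + 1) + (S + 1)) := by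
      simp only [hFp]
      rw [Summable.tsum_eq_zero_add hsum]
      ring
    rw [e2]
    apply myNormAdd2
    · simp only [Nat.zero_add]
      exact le_trans (hfirst S hS) hip2le
    · apply IsUltrametricDist.norm_tsum_le_of_forall_le_of_nonneg hip0.le
      intro i
      rw [htermP S hS (i + 1 + 1) (by omega)]
      exact le_trans (hδub (i + 1 + 1) (by omega)) hδle
  have hFp_lip : ∀ S S' : ℚ_[p], ‖S - 1‖ ≤ ip → ‖S' - 1‖ ≤ ip →
      ‖Fp S - Fp S'‖ ≤ ip * ‖S - S'‖ := by
    intro S S' hS hS'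
    have e : Fp S - Fp S' = ∑' i : ℕ, (L (i + 1) * (S + 1) / (A (i + 1) + (S + 1))
        - L (i + 1) * (S' + 1) / (A (i + 1) + (S' + 1))) := by
      simp only [hFp]
      exact (Summable.tsum_sub (hsumP S hS) (hsumP S' hS')).symm
    rw [e]
    apply IsUltrametricDist.norm_tsum_le_of_forall_le_of_nonneg (by positivity)
    intro i
    have hd1 := hdenP0 S hS (i + 1) (by omega)
    have hd2 := hdenP0 S' hS' (i + 1) (by omega)
    have e2 : L (i + 1) * (S + 1) / (A (i + 1) + (S + 1))
        - L (i + 1) * (S' + 1) / (A (i + 1) + (S' + 1))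
        = L (i + 1) * A (i + 1) * (S - S')
          / ((A (i + 1) + (S + 1)) * (A (i + 1) + (S' + 1))) := by
      field_simp
      ring
    rw [e2, norm_div, norm_mul, norm_mul, norm_mul,
      hdenP S hS (i + 1) (by omega), hdenP S' hS' (i + 1) (by omega), one_mul, div_one]
    exact mul_le_mul_of_nonneg_right (hLA (i + 1) (by omega)) (norm_nonneg _)
  obtain ⟨Sp, hSp_ball, hSp_fix⟩ :=
    myFixedPoint Fp 1 ip ip hip0.le hip0.le hip1 hFp_maps hFp_lip
  set hP : ℕ → ℚ_[p] := fun i => if i = 0 then 0 else L i * (Sp + 1) / (A i + (Sp + 1))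
    with hhP
  clear_value hP
  have hP_eq : ∀ i, 1 ≤ i → hP i = L i * (Sp + 1) / (A i + (Sp + 1)) := by
    intro i hi
    simp only [hhP]
    rw [if_neg (by omega)]
  have hP_sum : Summable (fun j : ℕ => hP (j + 1)) :=
    (hsumP Sp hSp_ball).congr (fun j => (hP_eq (j + 1) (by omega)).symm)
  have hP_tsum : (∑' j : ℕ, hP (j + 1)) = Sp := by
    rw [tsum_congr (fun j => hP_eq (j + 1) (by omega))]
    have h := hSp_fix
    simp only [hFp] at h
    exact h
  have hupS : ‖Sp + 1‖ = 1 := hu Sp hSp_ball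
  have hSpθn : ‖Sp + θ‖ = 1 := by
    have e : Sp + θ = (Sp + 1) + (θ - 1) := by ring
    rw [e, myNormAddEqLeft, hupS]
    rw [hθ', hupS]; exact hip1
  have hSpθ : Sp + θ ≠ 0 := by
    intro h0
    rw [h0, norm_zero] at hSpθn
    norm_num at hSpθn
  have hP_eqn : ∀ i, 1 ≤ i → hP i =
      L i * (((θ - 1) * hP i + (∑' j : ℕ, hP (j + 1)) + 1) /
        ((∑' j : ℕ, hP (j + 1)) + θ)) := by
    intro i hi
    rw [hP_tsum]
    apply myAlgebra (L i) Sp θ (hP i) hSpθ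
    have hDe : Sp + θ - L i * (θ - 1) = A i + (Sp + 1) := by
      simp only [hA]; ring
    rw [hDe, hP_eq i hi]
    exact div_mul_cancel₀ _ (hdenP0 Sp hSp_ball i hi)
  -- ################ MINUS SOLUTION ################
  set G : ℚ_[p] → ℚ_[p] := fun t => ∑' i : ℕ, L (i + 2) * t / (A (i + 2) + t) with hG
  clear_value G
  have hdenM : ∀ t : ℚ_[p], ‖t‖ ≤ ip ^ 3 → ∀ i, 2 ≤ i → ‖A i + t‖ = ip := by
    intro t ht i hi
    rw [myNormAddEqLeft, hA2 i hi]
    rw [hA2 i hi]; exact lt_of_le_of_lt ht hip3lt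
  have hdenM0 : ∀ t : ℚ_[p], ‖t‖ ≤ ip ^ 3 → ∀ i, 2 ≤ i → A i + t ≠ 0 := by
    intro t ht i hi h0
    have := hdenM t ht i hi
    rw [h0, norm_zero] at this
    exact absurd this.symm (ne_of_gt hip0)
  have htermM : ∀ t : ℚ_[p], ‖t‖ ≤ ip ^ 3 → ∀ i, 2 ≤ i →
      ‖L i * t / (A i + t)‖ = ‖L i‖ * ‖t‖ / ip := by
    intro t ht i hi
    rw [norm_div, norm_mul, hdenM t ht i hi]
  have htermM_t : ∀ t : ℚ_[p], ‖t‖ ≤ ip ^ 3 → ∀ i, 2 ≤ i →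
      ‖L i * t / (A i + t)‖ ≤ ‖t‖ := by
    intro t ht i hi
    rw [htermM t ht i hi, div_le_iff₀ hip0]
    calc ‖L i‖ * ‖t‖ ≤ ip * ‖t‖ := mul_le_mul_of_nonneg_right (hLip i hi) (norm_nonneg t)
    _ = ‖t‖ * ip := mul_comm _ _
  have htermM_L : ∀ t : ℚ_[p], ‖t‖ ≤ ip ^ 3 → ∀ i, 2 ≤ i →
      ‖L i * t / (A i + t)‖ ≤ ip ^ 2 * ‖L i‖ := by
    intro t ht i hi
    rw [htermM t ht i hi, div_le_iff₀ hip0]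
    calc ‖L i‖ * ‖t‖ ≤ ‖L i‖ * ip ^ 3 := mul_le_mul_of_nonneg_left ht (norm_nonneg (L i))
    _ = ip ^ 2 * ‖L i‖ * ip := by ring
  have hG_sum : ∀ t : ℚ_[p], ‖t‖ ≤ ip ^ 3 →
      Summable (fun i : ℕ => L (i + 2) * t / (A (i + 2) + t)) := by
    intro t ht
    apply mySummable L hLten _ (ip ^ 2) 2
    intro i
    exact htermM_L t ht (i + 2) (by omega)
  have hG_le : ∀ t : ℚ_[p], ‖t‖ ≤ ip ^ 3 → ‖G t‖ ≤ ‖t‖ := by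
    intro t ht
    simp only [hG]
    apply IsUltrametricDist.norm_tsum_le_of_forall_le_of_nonneg (norm_nonneg t)
    intro i
    exact htermM_t t ht (i + 2) (by omega)
  have hG_lip : ∀ t t' : ℚ_[p], ‖t‖ ≤ ip ^ 3 → ‖t'‖ ≤ ip ^ 3 →
      ‖G t - G t'‖ ≤ ‖t - t'‖ := by
    intro t t' ht ht'
    have e : G t - G t' = ∑' i : ℕ, (L (i + 2) * t / (A (i + 2) + t)
        - L (i + 2) * t' / (A (i + 2) + t')) := by
      simp only [hG]
      exact (Summable.tsum_sub (hG_sum t ht) (hG_sum t' ht')).symm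
    rw [e]
    apply IsUltrametricDist.norm_tsum_le_of_forall_le_of_nonneg (norm_nonneg _)
    intro i
    have hd1 := hdenM0 t ht (i + 2) (by omega)
    have hd2 := hdenM0 t' ht' (i + 2) (by omega)
    have e2 : L (i + 2) * t / (A (i + 2) + t) - L (i + 2) * t' / (A (i + 2) + t')
        = L (i + 2) * A (i + 2) * (t - t') / ((A (i + 2) + t) * (A (i + 2) + t')) := by
      field_simp
      ring
    rw [e2, norm_div, norm_mul, norm_mul, norm_mul, hA2 (i + 2) (by omega),
      hdenM t ht (i + 2) (by omega), hdenM t' ht' (i + 2) (by omega), div_le_iff₀ (by positivity)]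
    calc ‖L (i + 2)‖ * ip * ‖t - t'‖ ≤ ip * ip * ‖t - t'‖ :=
          mul_le_mul_of_nonneg_right
            (mul_le_mul_of_nonneg_right (hLip (i + 2) (by omega)) hip0.le) (norm_nonneg _)
    _ = ‖t - t'‖ * (ip * ip) := by ring
  have h1pα : ‖(1 : ℚ_[p]) + α‖ = 1 := by
    have e : (1 : ℚ_[p]) + α = 2 + (-(1 - α)) := by ring
    rw [e, myNormAddEqLeft, norm2]
    rw [norm_neg, norm2]
    exact lt_of_le_of_lt hα1' hip2lt
  have h1pα0 : (1 : ℚ_[p]) + α ≠ 0 := by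
    intro h0
    rw [h0, norm_zero] at h1pα
    norm_num at h1pα
  set Psi : ℚ_[p] → ℚ_[p] :=
    fun t => (A 1 * t + t ^ 2 - A 1 - G t * (A 1 + t)) / (1 + α) with hPsi
  clear_value Psi
  have hPsi_maps : ∀ t : ℚ_[p], ‖t - 0‖ ≤ ip ^ 3 → ‖Psi t - 0‖ ≤ ip ^ 3 := by
    intro t ht
    rw [sub_zero] at ht ⊢
    simp only [hPsi]
    rw [norm_div, h1pα, div_one]
    have hA1t : ‖A 1 + t‖ ≤ ip ^ 3 := myNormAdd2 hA1 ht
    apply myNormSum4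
    · rw [norm_mul]
      calc ‖A 1‖ * ‖t‖ ≤ ip ^ 3 * 1 :=
            mul_le_mul hA1 (le_trans ht hip3le1) (norm_nonneg _) hip3pos.le
      _ = ip ^ 3 := mul_one _
    · rw [norm_pow, sq]
      calc ‖t‖ * ‖t‖ ≤ ip ^ 3 * 1 :=
            mul_le_mul ht (le_trans ht hip3le1) (norm_nonneg _) hip3pos.le
      _ = ip ^ 3 := mul_one _
    · exact hA1
    · rw [norm_mul]
      have h1 : ‖G t‖ ≤ ip ^ 3 := le_trans (hG_le t ht) ht
      have h2 : ‖A 1 + t‖ ≤ 1 := le_trans (myNormAdd2 hA1 ht) hip3le1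
      calc ‖G t‖ * ‖A 1 + t‖ ≤ ip ^ 3 * 1 :=
            mul_le_mul h1 h2 (norm_nonneg _) hip3pos.le
      _ = ip ^ 3 := mul_one _
  have hPsi_lip : ∀ t t' : ℚ_[p], ‖t - 0‖ ≤ ip ^ 3 → ‖t' - 0‖ ≤ ip ^ 3 →
      ‖Psi t - Psi t'‖ ≤ ip * ‖t - t'‖ := by
    intro t t' ht ht'
    rw [sub_zero] at ht ht'
    have e : Psi t - Psi t' = (A 1 * (t - t') + (t + t') * (t - t')
        - (G t - G t') * (A 1 + t) - G t' * (t - t')) / (1 + α) := by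
      simp only [hPsi]
      field_simp
      ring
    rw [e, norm_div, h1pα, div_one]
    have hbig : ∀ x : ℚ_[p], ‖x‖ ≤ ip ^ 3 → ‖x * (t - t')‖ ≤ ip ^ 3 * ‖t - t'‖ := by
      intro x hx
      rw [norm_mul]
      exact mul_le_mul_of_nonneg_right hx (norm_nonneg _)
    have hle3 : ip ^ 3 * ‖t - t'‖ ≤ ip * ‖t - t'‖ :=
      mul_le_mul_of_nonneg_right hip3le (norm_nonneg _)
    apply myNormSum4
    · exact le_trans (hbig _ hA1) hle3
    · exact le_trans (hbig _ (myNormAdd2 ht ht')) hle3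
    · rw [norm_mul]
      have h1 := hG_lip t t' ht ht'
      have h2 : ‖A 1 + t‖ ≤ ip ^ 3 := myNormAdd2 hA1 ht
      calc ‖G t - G t'‖ * ‖A 1 + t‖ ≤ ‖t - t'‖ * ip ^ 3 := by
            apply mul_le_mul h1 h2 (norm_nonneg _) (norm_nonneg _)
      _ = ip ^ 3 * ‖t - t'‖ := by ring
      _ ≤ ip * ‖t - t'‖ := hle3
    · exact le_trans (hbig _ (le_trans (hG_le t' ht') ht')) hle3
  obtain ⟨tm, htm_ball, htm_fix⟩ :=
    myFixedPoint Psi 0 (ip ^ 3) ip hip3pos.le hip0.le hip1 hPsi_maps hPsi_lip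
  rw [sub_zero] at htm_ball
  set Gm : ℚ_[p] := G tm with hGm
  clear_value Gm
  have hGm_le : ‖Gm‖ ≤ ip ^ 3 := by
    rw [hGm]; exact le_trans (hG_le tm htm_ball) htm_ball
  have eq1 : A 1 * tm + tm ^ 2 - A 1 - Gm * (A 1 + tm) = tm * (1 + α) := by
    have h1 := htm_fix
    simp only [hPsi] at h1
    rw [div_eq_iff h1pα0, ← hGm] at h1
    exact h1
  set hM : ℕ → ℚ_[p] := fun i => if i = 0 then 0 else
    if i = 1 then tm - 1 - Gm else L i * tm / (A i + tm) with hhM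
  clear_value hM
  have hM1 : hM 1 = tm - 1 - Gm := by simp [hhM]
  have hMi : ∀ i, 2 ≤ i → hM i = L i * tm / (A i + tm) := by
    intro i hi
    simp only [hhM]
    rw [if_neg (by omega), if_neg (by omega)]
  have hM1_norm : ‖hM 1‖ ≤ 1 := by
    rw [hM1]
    have h1 : ‖tm - (1 : ℚ_[p])‖ ≤ 1 :=
      myNormSub2 (le_trans htm_ball hip3le1) (by rw [norm_one])
    exact myNormSub2 h1 (le_trans hGm_le hip3le1)
  have hM_bound : ∀ i : ℕ, ‖hM i‖ ≤ ‖L i‖ := by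
    intro i
    rcases (by omega : i = 0 ∨ i = 1 ∨ 2 ≤ i) with rfl | rfl | hi
    · have h0 : hM 0 = 0 := by simp [hhM]
      rw [h0, norm_zero]
      exact norm_nonneg _
    · rw [hL1n]; exact hM1_norm
    · calc ‖hM i‖ ≤ ip ^ 2 * ‖L i‖ := by
            rw [hMi i hi]; exact htermM_L tm htm_ball i hi
      _ ≤ 1 * ‖L i‖ := mul_le_mul_of_nonneg_right hip2lt.le (norm_nonneg _)
      _ = ‖L i‖ := one_mul _
  have hM_sum : Summable (fun j : ℕ => hM (j + 1)) := by
    apply mySummable L hLten _ 1 1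
    intro i
    rw [one_mul]
    exact hM_bound (i + 1)
  have hM_tsum : (∑' j : ℕ, hM (j + 1)) = tm - 1 := by
    rw [Summable.tsum_eq_zero_add hM_sum]
    have htail : ∀ j : ℕ, hM (j + 1 + 1) = L (j + 2) * tm / (A (j + 2) + tm) := by
      intro j
      have e : j + 1 + 1 = j + 2 := by omega
      rw [e]
      exact hMi (j + 2) (by omega)
    rw [tsum_congr htail]
    have hGmt : Gm = ∑' j : ℕ, L (j + 2) * tm / (A (j + 2) + tm) := by
      rw [hGm]; simp only [hG]
    rw [← hGmt]
    have h01 : (0 : ℕ) + 1 = 1 := rfl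
    rw [h01, hM1]
    ring
  have hSmθn : ‖(tm - 1) + θ‖ = ip := by
    have e : (tm - 1) + θ = (θ - 1) + tm := by ring
    rw [e, myNormAddEqLeft, hθ']
    rw [hθ']; exact lt_of_le_of_lt htm_ball hip3lt
  have hSmθ : (tm - 1) + θ ≠ 0 := by
    intro h0
    rw [h0, norm_zero] at hSmθn
    exact absurd hSmθn.symm (ne_of_gt hip0)
  have hM_eqn : ∀ i, 1 ≤ i → hM i =
      L i * (((θ - 1) * hM i + (∑' j : ℕ, hM (j + 1)) + 1) /
        ((∑' j : ℕ, hM (j + 1)) + θ)) := by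
    intro i hi
    rw [hM_tsum]
    apply myAlgebra (L i) (tm - 1) θ (hM i) hSmθ
    rcases (by omega : i = 1 ∨ 2 ≤ i) with h1 | h2
    · subst h1
      rw [hL1, hM1]
      have hA1e : A 1 = (θ - 1) * (1 - α) := by simp only [hA, hL1]
      rw [hA1e] at eq1
      linear_combination eq1
    · have hDe : tm - 1 + θ - L i * (θ - 1) = A i + tm := by
        simp only [hA]; ring
      have he2 : (tm - 1 + 1) = tm := by ring
      rw [hDe, he2, hMi i h2]
      exact div_mul_cancel₀ _ (hdenM0 tm htm_ball i h2)
  -- ################ FINAL PROPERTIES ################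
  have hP1_dist : ‖hP 1 - 1‖ ≤ ip ^ 2 := by
    rw [hP_eq 1 le_rfl]
    exact hfirst Sp hSp_ball
  have hM1_dist : ‖hM 1 + 1‖ ≤ ip ^ 3 := by
    have e : hM 1 + 1 = tm - Gm := by rw [hM1]; ring
    rw [e]
    exact myNormSub2 htm_ball hGm_le
  have hPM1 : ‖hP 1 - hM 1‖ = 1 := by
    have e : hP 1 - hM 1 = 2 + ((hP 1 - 1) - (hM 1 + 1)) := by ring
    rw [e, myNormAddEqLeft, norm2]
    rw [norm2]
    exact lt_of_le_of_lt (myNormSub2 hP1_dist (le_trans hM1_dist hip3le2)) hip2lt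
  have hup_tm : ‖(Sp + 1) - tm‖ = 1 := by
    have e : (Sp + 1) - tm = 2 + ((Sp - 1) - tm) := by ring
    rw [e, myNormAddEqLeft, norm2]
    rw [norm2]
    exact lt_of_le_of_lt (myNormSub2 hSp_ball (le_trans htm_ball hip3le)) hip1
  have hdiff : ∀ i, 2 ≤ i → ‖hP i - hM i‖ = ‖L i‖ := by
    intro i hi
    have hd1 := hdenP0 Sp hSp_ball i (by omega)
    have hd2 := hdenM0 tm htm_ball i hi
    have e2 : hP i - hM i = L i * A i * ((Sp + 1) - tm)
        / ((A i + (Sp + 1)) * (A i + tm)) := by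
      rw [hP_eq i (by omega), hMi i hi]
      field_simp
      ring
    rw [e2, norm_div, norm_mul, norm_mul, norm_mul, hA2 i hi, hup_tm,
      hdenP Sp hSp_ball i (by omega), hdenM tm htm_ball i hi, mul_one, one_mul,
      mul_div_assoc, div_self (ne_of_gt hip0), mul_one]
  have hP_ten : Tendsto (fun i => ‖hP i‖) atTop (nhds 0) := by
    apply squeeze_zero (fun i => norm_nonneg _) _ hLten
    intro i
    rcases (by omega : i = 0 ∨ 1 ≤ i) with h0 | h1
    · subst h0
      have h0' : hP 0 = 0 := by simp [hhP]
      rw [h0', norm_zero]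
      exact norm_nonneg _
    · rw [hP_eq i h1, htermP Sp hSp_ball i h1]
  have hM_ten : Tendsto (fun i => ‖hM i‖) atTop (nhds 0) :=
    squeeze_zero (fun i => norm_nonneg _) hM_bound hLten
  have hPneM : hP ≠ hM := by
    intro h
    rw [h, sub_self, norm_zero] at hPM1
    norm_num at hPM1
  have hsup : (⨆ i : ℕ, ‖hP (i + 2) - hM (i + 2)‖) = δ := by
    have hvals : ∀ i : ℕ, ‖hP (i + 2) - hM (i + 2)‖ = ‖L (i + 2)‖ :=
      fun i => hdiff (i + 2) (by omega)
    apply le_antisymm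
    · apply ciSup_le
      intro i
      show ‖hP (i + 2) - hM (i + 2)‖ ≤ δ
      rw [hvals i]
      exact hδub (i + 2) (by omega)
    · obtain ⟨i0, hi0, heq⟩ := hδmax
      obtain ⟨j, rfl⟩ : ∃ j, i0 = j + 2 := ⟨i0 - 2, by omega⟩
      have hbdd : BddAbove (Set.range fun i : ℕ => ‖hP (i + 2) - hM (i + 2)‖) := by
        refine ⟨δ, ?_⟩
        rintro x ⟨i, rfl⟩
        show ‖hP (i + 2) - hM (i + 2)‖ ≤ δ
        rw [hvals i]
        exact hδub (i + 2) (by omega)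
      calc δ = ‖hP (j + 2) - hM (j + 2)‖ := by rw [hvals j, heq]
      _ ≤ ⨆ i : ℕ, ‖hP (i + 2) - hM (i + 2)‖ := le_ciSup hbdd j
  refine ⟨hP, hM, hPneM, hP_ten, hM_ten, ?_, ?_, hP_eqn, hM_eqn, ?_, ?_, hPM1, hdiff, hsup⟩
  · rw [hP_tsum]; exact hSpθ
  · rw [hM_tsum]; exact hSmθ
  · rw [one_div, ← hip_def]; exact le_trans hP1_dist hip2le
  · rw [← hipsq]
    exact le_trans hM1_dist hip3le2
end

section
/- Let p ≥ 3 be prime and θ ∈ ℚ_p with |θ − 1|_p ≤ 1/p. Let ĥ = (ĥ_i)_{i≥1} be a sequence in ℚ_p with |ĥ_1 − 1|_p ≤ 1/p, |ĥ_i|_p ≤ δ for all i ≥ 2 for some 0 < δ < 1, and |ĥ_i|_p → 0; put X := Σ_{j≥2} ĥ_j. Then |ĥ_1 + X + θ|_p = 1; moreover |(θĥ_1 + X + 1)/(ĥ_1 + X + θ)|_p = 1 and |(θĥ_1 + X + 1)/(ĥ_1 + X + θ) − 1|_p = |θ−1|_p·|ĥ_1 − 1|_p < 1/p, and for every i ≥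 2, |((θ−1)ĥ_i + ĥ_1 + X + 1)/(ĥ_1 + X + θ)|_p = 1 and |((θ−1)ĥ_i + ĥ_1 + X + 1)/(ĥ_1 + X + θ) − 1|_p = |θ−1|_p ≤ 1/p. (Consequently all these ratios lie in the domain of the p-adic logarithm, so the associated measure μ₊ is a genuine p-adic Gibbs measure.) -/
open Filter

private lemma norm_add_eq_right' {p : ℕ} [Fact p.Prime] {a b : ℚ_[p]}
    (h : ‖a‖ < ‖b‖) : ‖a + b‖ = ‖b‖ := by
  rw [Padic.add_eq_max_of_ne h.ne, max_eq_right h.le]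

/-- Let `p ≥ 3` be prime, `θ ∈ ℚ_p` with `|θ-1|_p ≤ 1/p`, and
let `ĥ = (ĥ_i)_{i≥1}` be a sequence in `ℚ_p` with `|ĥ₁ - 1|_p ≤ 1/p`,
`|ĥ_i|_p ≤ δ` for all `i ≥ 2` for some `0 < δ < 1`, and `|ĥ_i|_p → 0`;
put `X = Σ_{j≥2} ĥ_j`.  Then `|ĥ₁ + X + θ|_p = 1`,
`|(θĥ₁ + X + 1)/(ĥ₁ + X + θ)|_p = 1`,
`|(θĥ₁ + X + 1)/(ĥ₁ + X + θ) - 1|_p = |θ-1|_p·|ĥ₁ - 1|_p < 1/p`, and for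
every `i ≥ 2`, `|((θ-1)ĥ_i + ĥ₁ + X + 1)/(ĥ₁ + X + θ)|_p = 1` and
`|((θ-1)ĥ_i + ĥ₁ + X + 1)/(ĥ₁ + X + θ) - 1|_p = |θ-1|_p ≤ 1/p`. -/
theorem potts_plus_measure_is_Gibbs (p : ℕ) [Fact p.Prime] (hp : 3 ≤ p)
    (θ : ℚ_[p]) (hθ : ‖θ - 1‖ ≤ 1 / (p : ℝ))
    (h : ℕ → ℚ_[p]) (δ : ℝ) (hδ0 : 0 < δ) (hδ1 : δ < 1)
    (hh1 : ‖h 1 - 1‖ ≤ 1 / (p : ℝ))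
    (hhB : ∀ i, 2 ≤ i → ‖h i‖ ≤ δ)
    (hhten : Tendsto (fun i => ‖h i‖) atTop (nhds 0))
    (X : ℚ_[p]) (hX : X = ∑' j : ℕ, h (j + 2)) :
    ‖h 1 + X + θ‖ = 1 ∧
    ‖(θ * h 1 + X + 1) / (h 1 + X + θ)‖ = 1 ∧
    ‖(θ * h 1 + X + 1) / (h 1 + X + θ) - 1‖ = ‖θ - 1‖ * ‖h 1 - 1‖ ∧
    ‖θ - 1‖ * ‖h 1 - 1‖ < 1 / (p : ℝ) ∧
    (∀ i, 2 ≤ i →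
      ‖((θ - 1) * h i + h 1 + X + 1) / (h 1 + X + θ)‖ = 1 ∧
      ‖((θ - 1) * h i + h 1 + X + 1) / (h 1 + X + θ) - 1‖ = ‖θ - 1‖ ∧
      ‖θ - 1‖ ≤ 1 / (p : ℝ)) := by
  have hp3 : (3 : ℝ) ≤ (p : ℝ) := by exact_mod_cast hp
  have hpinv : 1 / (p : ℝ) < 1 := by
    rw [div_lt_one (by linarith)]; linarith
  have hX1 : ‖X‖ ≤ δ := by
    rw [hX]
    exact IsUltrametricDist.norm_tsum_le_of_forall_le_of_nonneg hδ0.le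
      fun j => hhB _ (by omega)
  have hXlt : ‖X‖ < 1 := lt_of_le_of_lt hX1 hδ1
  have hθlt : ‖θ - 1‖ < 1 := lt_of_le_of_lt hθ hpinv
  have hh1lt : ‖h 1 - 1‖ < 1 := lt_of_le_of_lt hh1 hpinv
  -- norm of 2 is 1
  have h2 : ‖(2 : ℚ_[p])‖ = 1 := by
    have h2le : ‖((2 : ℤ) : ℚ_[p])‖ ≤ 1 := Padic.norm_int_le_one 2
    have : ¬ ‖((2 : ℤ) : ℚ_[p])‖ < 1 := by
      rw [Padic.norm_intCast_lt_one_iff]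
      intro hdvd
      have := Int.le_of_dvd (by norm_num) hdvd
      omega
    push_cast at h2le this
    linarith [lt_or_eq_of_le h2le]
  -- norm of denominator
  have hD : ‖h 1 + X + θ‖ = 1 := by
    have hrw : h 1 + X + θ = ((h 1 - 1) + X + (θ - 1)) + 2 := by ring
    have hsmall : ‖(h 1 - 1) + X + (θ - 1)‖ < 1 := by
      refine (IsUltrametricDist.norm_add_le_max _ _).trans_lt (max_lt ?_ hθlt)
      exact (IsUltrametricDist.norm_add_le_max _ _).trans_lt (max_lt hh1lt hXlt)
    rw [hrw, norm_add_eq_right' (by rw [h2]; exact hsmall), h2]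
  have hDne : h 1 + X + θ ≠ 0 := by
    intro h0; rw [h0, norm_zero] at hD; norm_num at hD
  -- norm of first numerator
  have hN1 : ‖θ * h 1 + X + 1‖ = 1 := by
    have hrw : θ * h 1 + X + 1
        = ((θ - 1) * (h 1 - 1) + (θ - 1) + (h 1 - 1) + X) + 2 := by ring
    have hsmall : ‖(θ - 1) * (h 1 - 1) + (θ - 1) + (h 1 - 1) + X‖ < 1 := by
      refine (IsUltrametricDist.norm_add_le_max _ _).trans_lt (max_lt ?_ hXlt)
      refine (IsUltrametricDist.norm_add_le_max _ _).trans_lt (max_lt ?_ hh1lt)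
      refine (IsUltrametricDist.norm_add_le_max _ _).trans_lt (max_lt ?_ hθlt)
      rw [norm_mul]
      calc ‖θ - 1‖ * ‖h 1 - 1‖ ≤ 1 * ‖h 1 - 1‖ := by
            exact mul_le_mul_of_nonneg_right hθlt.le (norm_nonneg _)
        _ < 1 := by rw [one_mul]; exact hh1lt
    rw [hrw, norm_add_eq_right' (by rw [h2]; exact hsmall), h2]
  refine ⟨hD, ?_, ?_, ?_, ?_⟩
  · rw [norm_div, hN1, hD]; norm_num
  · have hrw : (θ * h 1 + X + 1) / (h 1 + X + θ) - 1
        = ((θ - 1) * (h 1 - 1)) / (h 1 + X + θ) := by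
      field_simp; ring
    rw [hrw, norm_div, norm_mul, hD, div_one]
  · have hnn : (0 : ℝ) ≤ ‖h 1 - 1‖ := norm_nonneg _
    have hnn2 : (0 : ℝ) ≤ ‖θ - 1‖ := norm_nonneg _
    have hppos : (0 : ℝ) < 1 / (p : ℝ) := by positivity
    calc ‖θ - 1‖ * ‖h 1 - 1‖ ≤ (1 / (p : ℝ)) * (1 / (p : ℝ)) := by
          exact mul_le_mul hθ hh1 hnn hppos.le
      _ < (1 / (p : ℝ)) * 1 := by
          exact mul_lt_mul_of_pos_left hpinv hppos
      _ = 1 / (p : ℝ) := mul_one _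
  · intro i hi
    have hhi : ‖h i‖ < 1 := lt_of_le_of_lt (hhB i hi) hδ1
    have hhi1 : ‖h i - 1‖ = 1 := by
      have : h i - 1 = h i + (-1) := by ring
      rw [this, norm_add_eq_right' (by rw [norm_neg, norm_one]; exact hhi),
        norm_neg, norm_one]
    have hNi : ‖(θ - 1) * h i + h 1 + X + 1‖ = 1 := by
      have hrw : (θ - 1) * h i + h 1 + X + 1
          = ((θ - 1) * h i + (h 1 - 1) + X) + 2 := by ring
      have hsmall : ‖(θ - 1) * h i + (h 1 - 1) + X‖ < 1 := by
        refine (IsUltrametricDist.norm_add_le_max _ _).trans_lt (max_lt ?_ hXlt)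
        refine (IsUltrametricDist.norm_add_le_max _ _).trans_lt (max_lt ?_ hh1lt)
        rw [norm_mul]
        calc ‖θ - 1‖ * ‖h i‖ ≤ 1 * ‖h i‖ :=
              mul_le_mul_of_nonneg_right hθlt.le (norm_nonneg _)
          _ < 1 := by rw [one_mul]; exact hhi
      rw [hrw, norm_add_eq_right' (by rw [h2]; exact hsmall), h2]
    refine ⟨by rw [norm_div, hNi, hD]; norm_num, ?_, hθ⟩
    have hrw : ((θ - 1) * h i + h 1 + X + 1) / (h 1 + X + θ) - 1
        = ((θ - 1) * (h i - 1)) / (h 1 + X + θ) := by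
      field_simp; ring
    rw [hrw, norm_div, norm_mul, hD, div_one, hhi1, mul_one]
end

section
/- Let p ≥ 3 be prime and θ ∈ ℚ_p with |θ − 1|_p = 1/p. Let ĥ = (ĥ_i)_{i≥1} be a sequence in ℚ_p with |ĥ_1 + 1|_p ≤ 1/p², |ĥ_i|_p ≤ 1/p² for all i ≥ 2, and |ĥ_i|_p → 0; put X := Σ_{j≥2} ĥ_j. Then |ĥ_1 + X + θ|_p = 1/p, and for every i ≥ 2, |((θ−1)ĥ_i + ĥ_1 + X + 1)/(ĥ_1 + X + θ)|_p ≤ 1/p. (Consequently these ratios cannot be written as p-adic exponentials exp_p(κ), since |exp_p(κ)|_p = 1; hence the associated measure μ₋ is a strictly generalized p-adic Gibbs measure.) -/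
open Filter

/-!
With `a := ĥ₁ + 1 + X` we have `‖a‖ ≤ p⁻²` (ultrametric bound on the series `X`), while
`‖θ - 1‖ = p⁻¹`. The denominator is `a + (θ - 1)`, so the strict ultrametric triangle
inequality gives it norm exactly `p⁻¹`; the numerator is `(θ - 1) ĥᵢ + a`, of norm `≤ p⁻²`.
Hence the quotient has norm `≤ p⁻² / p⁻¹ = p⁻¹`.
-/

namespace IsUltrametricDist

lemma norm_add_eq_right_of_norm_lt_s12 {E : Type*} [SeminormedAddCommGroup E] [IsUltrametricDist E]
    {a b : E} (h : ‖a‖ < ‖b‖) : ‖a + b‖ = ‖b‖ := by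
  rw [norm_add_eq_max_of_norm_ne_norm h.ne, max_eq_right h.le]

lemma norm_mul_add_le_of_norm_le_one {R : Type*} [SeminormedRing R] [IsUltrametricDist R]
    {t u a : R} {ε : ℝ} (ht : ‖t‖ ≤ 1) (hu : ‖u‖ ≤ ε) (ha : ‖a‖ ≤ ε) : ‖t * u + a‖ ≤ ε := by
  refine (norm_add_le_max _ _).trans (max_le ?_ ha)
  calc ‖t * u‖ ≤ ‖t‖ * ‖u‖ := norm_mul_le t u
    _ ≤ 1 * ε := mul_le_mul ht hu (norm_nonneg u) zero_le_one
    _ = ε := one_mul ε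

lemma norm_mul_add_div_add_le {K : Type*} [NormedField K] [IsUltrametricDist K]
    {t u a : K} {ε r : ℝ} (hεr : ε < r) (hr : r ≤ 1) (ht : ‖t‖ = r) (hu : ‖u‖ ≤ ε)
    (ha : ‖a‖ ≤ ε) : ‖(t * u + a) / (a + t)‖ ≤ ε / r := by
  have hden : ‖a + t‖ = r := ht ▸ norm_add_eq_right_of_norm_lt_s12 (ht ▸ ha.trans_lt hεr)
  rw [norm_div, hden]
  have hr0 : 0 < r := (norm_nonneg a).trans_lt (ha.trans_lt hεr)
  exact div_le_div_of_nonneg_right (norm_mul_add_le_of_norm_le_one (ht ▸ hr) hu ha) hr0.le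

end IsUltrametricDist

theorem potts_minus_measure_not_Gibbs_general (p : ℕ) [Fact p.Prime]
    (θ : ℚ_[p]) (hθ : ‖θ - 1‖ = 1 / (p : ℝ))
    (h : ℕ → ℚ_[p])
    (hh1 : ‖h 1 + 1‖ ≤ 1 / (p : ℝ) ^ 2)
    (hhB : ∀ i, 2 ≤ i → ‖h i‖ ≤ 1 / (p : ℝ) ^ 2)
    (X : ℚ_[p]) (hX : X = ∑' j : ℕ, h (j + 2)) :
    ‖h 1 + X + θ‖ = 1 / (p : ℝ) ∧
    ∀ i, 2 ≤ i →
      ‖((θ - 1) * h i + h 1 + X + 1) / (h 1 + X + θ)‖ ≤ 1 / (p : ℝ) := by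
  have hp : (1 : ℝ) < p := by exact_mod_cast (Fact.out : p.Prime).one_lt
  have hpp : 1 / (p : ℝ) ^ 2 < 1 / p :=
    one_div_lt_one_div_of_lt (by positivity) (by nlinarith)
  have hp_le : 1 / (p : ℝ) ≤ 1 := (div_lt_one (by positivity)).2 hp |>.le
  have hXb : ‖X‖ ≤ 1 / (p : ℝ) ^ 2 :=
    hX ▸ IsUltrametricDist.norm_tsum_le_of_forall_le_of_nonneg (by positivity)
      fun j => hhB (j + 2) (by omega)
  have ha : ‖h 1 + 1 + X‖ ≤ 1 / (p : ℝ) ^ 2 :=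
    (IsUltrametricDist.norm_add_le_max _ _).trans (max_le hh1 hXb)
  have hden : h 1 + X + θ = (h 1 + 1 + X) + (θ - 1) := by ring
  refine ⟨hden ▸ hθ ▸ IsUltrametricDist.norm_add_eq_right_of_norm_lt_s12 (hθ ▸ ha.trans_lt hpp),
    fun i hi => ?_⟩
  have hnum : (θ - 1) * h i + h 1 + X + 1 = (θ - 1) * h i + (h 1 + 1 + X) := by ring
  calc ‖((θ - 1) * h i + h 1 + X + 1) / (h 1 + X + θ)‖
      ≤ 1 / (p : ℝ) ^ 2 / (1 / p) :=
        hnum ▸ hden ▸ IsUltrametricDist.norm_mul_add_div_add_le hpp hp_le hθ (hhB i hi) ha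
    _ = 1 / p := by field_simp

/-- Let `p ≥ 3` be prime, `θ ∈ ℚ_p` with `|θ-1|_p = 1/p`, and
let `ĥ = (ĥ_i)_{i≥1}` be a sequence in `ℚ_p` with `|ĥ₁ + 1|_p ≤ 1/p²`,
`|ĥ_i|_p ≤ 1/p²` for all `i ≥ 2`, `|ĥ_i|_p → 0`; put `X = Σ_{j≥2} ĥ_j`.
Then `|ĥ₁ + X + θ|_p = 1/p` and, for every `i ≥ 2`,
`|((θ-1)ĥ_i + ĥ₁ + X + 1)/(ĥ₁ + X + θ)|_p ≤ 1/p`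
(hence these ratios are not `p`-adic exponentials, and the associated
measure `μ₋` is a strictly generalized `p`-adic Gibbs measure). -/
theorem potts_minus_measure_not_Gibbs (p : ℕ) [Fact p.Prime] (hp : 3 ≤ p)
    (θ : ℚ_[p]) (hθ : ‖θ - 1‖ = 1 / (p : ℝ))
    (h : ℕ → ℚ_[p])
    (hh1 : ‖h 1 + 1‖ ≤ 1 / (p : ℝ) ^ 2)
    (hhB : ∀ i, 2 ≤ i → ‖h i‖ ≤ 1 / (p : ℝ) ^ 2)
    (hhten : Tendsto (fun i => ‖h i‖) atTop (nhds 0))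
    (X : ℚ_[p]) (hX : X = ∑' j : ℕ, h (j + 2)) :
    ‖h 1 + X + θ‖ = 1 / (p : ℝ) ∧
    ∀ i, 2 ≤ i →
      ‖((θ - 1) * h i + h 1 + X + 1) / (h 1 + X + θ)‖ ≤ 1 / (p : ℝ) :=
  potts_minus_measure_not_Gibbs_general p θ hθ h hh1 hhB X hX
end
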